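/- arXiv:1504.03414 — 9 statements merged into one kernel-verified Lean document; each statement's English description precedes it below -/
import Mathlib

section
/- Let c_1, ..., c_n be positive reals, and m a positive integer. Then for all x in R^n, the Cauchy form sum over (i_1,...,i_m) in [n]^m of x_{i_1}...x_{i_m}/(c_{i_1}+...+c_{i_m}) equals the integral from 0 to 1 of (sum_{i=1}^n t^{c_i - 1/m} x_i)^m dt. -/
open Finset

/-- For positive generating vector `c`, the Cauchy form equals
`∫_0^1 (∑ i t^{c_i - 1/m} x_i)^m dt`. -/
theorem stmt_1 (m n : ℕ) (hm : 0 < m) (hn : 0 < n)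
    (c : Fin n → ℝ) (hc : ∀ i, 0 < c i) (x : Fin n → ℝ) :
    ∑ f : Fin m → Fin n, (∏ j, x (f j)) / (∑ j, c (f j))
      = ∫ t in (0:ℝ)..1, (∑ i, t ^ (c i - 1 / (m : ℝ)) * x i) ^ m := by
  have hm' : (m : ℝ) ≠ 0 := Nat.cast_ne_zero.mpr hm.ne'
  -- For each f, the exponent sum
  have hsum : ∀ f : Fin m → Fin n,
      ∑ j, (c (f j) - 1 / (m : ℝ)) = (∑ j, c (f j)) - 1 := by
    intro f
    rw [Finset.sum_sub_distrib, Finset.sum_const, card_univ, Fintype.card_fin,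
      nsmul_eq_mul, mul_one_div, div_self hm']
  have hspos : ∀ f : Fin m → Fin n, 0 < ∑ j, c (f j) := fun f =>
    Finset.sum_pos (fun j _ => hc (f j)) (univ_nonempty_iff.mpr ⟨⟨0, hm⟩⟩)
  -- pointwise equality a.e. on (0,1] for each term
  have hterm : ∀ f : Fin m → Fin n, ∀ t : ℝ, 0 < t →
      ∏ j, (t ^ (c (f j) - 1 / (m : ℝ)) * x (f j))
        = (∏ j, x (f j)) * t ^ ((∑ j, c (f j)) - 1) := by
    intro f t ht
    rw [Finset.prod_mul_distrib, ← Real.rpow_sum_of_pos ht, hsum f, mul_comm]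
  have hint : ∀ f : Fin m → Fin n,
      IntervalIntegrable (fun t => ∏ j, (t ^ (c (f j) - 1 / (m : ℝ)) * x (f j)))
        MeasureTheory.volume 0 1 := by
    intro f
    have h1 : IntervalIntegrable (fun t : ℝ => (∏ j, x (f j)) * t ^ ((∑ j, c (f j)) - 1))
        MeasureTheory.volume 0 1 :=
      (intervalIntegral.intervalIntegrable_rpow' (by linarith [hspos f])).const_mul _
    refine h1.congr ?_
    intro t ht
    have ht0 : 0 < t := by
      rw [Set.uIoc_of_le (by norm_num : (0:ℝ) ≤ 1)] at ht
      exact ht.1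
    exact (hterm f t ht0).symm
  calc ∑ f : Fin m → Fin n, (∏ j, x (f j)) / (∑ j, c (f j))
      = ∑ f : Fin m → Fin n,
          ∫ t in (0:ℝ)..1, ∏ j, (t ^ (c (f j) - 1 / (m : ℝ)) * x (f j)) := by
        refine Finset.sum_congr rfl fun f _ => ?_
        have heq : (∫ t in (0:ℝ)..1, ∏ j, (t ^ (c (f j) - 1 / (m : ℝ)) * x (f j)))
            = ∫ t in (0:ℝ)..1, (∏ j, x (f j)) * t ^ ((∑ j, c (f j)) - 1) := by
          refine intervalIntegral.integral_congr_ae ?_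
          filter_upwards with t ht
          have ht0 : 0 < t := by
            rw [Set.uIoc_of_le (by norm_num : (0:ℝ) ≤ 1)] at ht
            exact ht.1
          exact hterm f t ht0
        rw [heq, intervalIntegral.integral_const_mul,
          integral_rpow (Or.inl (by linarith [hspos f]))]
        have hs := hspos f
        rw [sub_add_cancel, Real.one_rpow, Real.zero_rpow hs.ne']
        field_simp
        ring
    _ = ∫ t in (0:ℝ)..1, ∑ f : Fin m → Fin n,
          ∏ j, (t ^ (c (f j) - 1 / (m : ℝ)) * x (f j)) := by
        rw [intervalIntegral.integral_finset_sum (fun f _ => hint f)]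
    _ = ∫ t in (0:ℝ)..1, (∑ i, t ^ (c i - 1 / (m : ℝ)) * x i) ^ m := by
        refine intervalIntegral.integral_congr fun t _ => ?_
        rw [Fintype.sum_pow]
end

section
/- Let m be even and c_1,...,c_n reals with c_{i_1}+...+c_{i_m} nonzero for all index tuples. The Cauchy form f(x) = sum over (i_1,...,i_m) of x_{i_1}...x_{i_m}/(c_{i_1}+...+c_{i_m}) is nonnegative on R^n if and only if c_i > 0 for all i. -/
open Finset

/-- For even `m` and `c` with all `m`-fold sums nonzero, the Cauchy form is
nonnegative on `ℝ^n` iff all entries of `c` are positive. -/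
theorem stmt_3 (m n : ℕ) (hm : 0 < m) (hn : 0 < n) (hme : Even m)
    (c : Fin n → ℝ) (hc : ∀ f : Fin m → Fin n, (∑ j, c (f j)) ≠ 0) :
    (∀ x : Fin n → ℝ,
        0 ≤ ∑ f : Fin m → Fin n, (∏ j, x (f j)) / (∑ j, c (f j)))
      ↔ ∀ i, 0 < c i := by
  have hmne : (m : ℝ) ≠ 0 := Nat.cast_ne_zero.mpr hm.ne'
  have hFin : Nonempty (Fin m) := ⟨⟨0, hm⟩⟩
  constructor
  · intro H i
    have h1 := H (fun k => if k = i then 1 else 0)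
    have hsum : ∑ f : Fin m → Fin n,
        (∏ j, (if f j = i then (1 : ℝ) else 0)) / (∑ j, c (f j))
        = 1 / (m * c i) := by
      rw [Finset.sum_eq_single (fun _ => i)]
      · simp [mul_comm]
      · intro f _ hf
        obtain ⟨j, hj⟩ : ∃ j, f j ≠ i := by
          by_contra h; push_neg at h; exact hf (funext h)
        rw [Finset.prod_eq_zero (Finset.mem_univ j) (by simp [hj]), zero_div]
      · simp
    rw [hsum] at h1
    have hne : (m : ℝ) * c i ≠ 0 := by
      have := hc (fun _ => i); simpa [mul_comm] using this
    have h2 : 0 < 1 / ((m : ℝ) * c i) :=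
      lt_of_le_of_ne h1 (Ne.symm (one_div_ne_zero hne))
    have h3 : 0 < (m : ℝ) * c i := one_div_pos.mp h2
    have hmpos : (0 : ℝ) < m := by positivity
    nlinarith
  · intro hcpos x
    set S : (Fin m → Fin n) → ℝ := fun f => ∑ j, c (f j) with hS
    have hSpos : ∀ f : Fin m → Fin n, 0 < S f := fun f =>
      Finset.sum_pos (fun j _ => hcpos (f j)) Finset.univ_nonempty
    have key : ∑ f : Fin m → Fin n, (∏ j, x (f j)) / S f
        = ∫ t in (0:ℝ)..1, (∑ i, x i * t ^ (c i - 1 / m)) ^ m := by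
      have stepA : ∀ f : Fin m → Fin n,
          (∏ j, x (f j)) / S f
          = ∫ t in (0:ℝ)..1, (∏ j, x (f j)) * t ^ (S f - 1) := by
        intro f
        have hr : (-1 : ℝ) < S f - 1 := by linarith [hSpos f]
        rw [intervalIntegral.integral_const_mul, integral_rpow (Or.inl hr)]
        have h01 : S f - 1 + 1 = S f := by ring
        rw [h01, Real.one_rpow, Real.zero_rpow (hSpos f).ne']
        rw [div_eq_mul_one_div]
        ring
      rw [Finset.sum_congr rfl fun f _ => stepA f]
      rw [← intervalIntegral.integral_finset_sum]
      · apply intervalIntegral.integral_congr_ae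
        apply Filter.Eventually.of_forall
        intro t ht
        rw [Set.uIoc_of_le (by norm_num : (0:ℝ) ≤ 1)] at ht
        have ht0 : 0 < t := ht.1
        rw [Fintype.sum_pow]
        refine Finset.sum_congr rfl fun f _ => ?_
        rw [Finset.prod_mul_distrib, ← Real.rpow_sum_of_pos ht0]
        congr 1
        rw [Finset.sum_sub_distrib, Finset.sum_const]
        simp only [Finset.card_univ, Fintype.card_fin, nsmul_eq_mul]
        rw [mul_one_div, div_self hmne]
      · intro f _
        have hr : (-1 : ℝ) < S f - 1 := by linarith [hSpos f]
        exact (intervalIntegral.intervalIntegrable_rpow' hr).const_mul _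
    rw [hS] at key
    rw [key]
    apply intervalIntegral.integral_nonneg (by norm_num)
    intro t _
    exact hme.pow_nonneg _
end

section
/- Let m be even, c_1,...,c_n > 0. Then the Cauchy tensor generated by c is a limit of completely positive tensors: for each k, the tensor C_k with C_k x^m = sum_{j=1}^k (sum_{i=1}^n (j/k)^{c_i - 1/m} x_i / k^{1/m})^m converges to the Cauchy tensor as k tends to infinity; equivalently, the Riemann sums (1/k) sum_{j=1}^k (sum_i (j/k)^{c_i-1/m} x_i)^m converge to the Cauchy form for every x. -/
open Finset Filter intervalIntegral

private lemma int_eq (s a b : ℝ) (hs : 0 < s) :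
    (∫ t in a..b, t ^ (s - 1)) = (b ^ s - a ^ s) / s := by
  rw [integral_rpow (Or.inl (by linarith))]
  have h : s - 1 + 1 = s := by ring
  rw [h]

private lemma step1 (s a b : ℝ) (hs : 0 < s) (h1 : s ≤ 1) (ha : 0 ≤ a) (hab : a ≤ b)
    (hb : 0 < b) : b ^ (s - 1) * (b - a) ≤ (b ^ s - a ^ s) / s := by
  rcases ha.eq_or_lt with rfl | ha'
  · rw [Real.zero_rpow hs.ne', sub_zero, sub_zero]
    have hbs : b ^ (s - 1) * b = b ^ s := by
      rw [← Real.rpow_add_one hb.ne' (s - 1)]; norm_num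
    rw [hbs, le_div_iff₀ hs]
    nlinarith [Real.rpow_nonneg hb.le s]
  · rw [← int_eq s a b hs]
    have hconst : b ^ (s - 1) * (b - a) = ∫ _ in a..b, b ^ (s - 1) := by
      rw [intervalIntegral.integral_const, smul_eq_mul]; ring
    rw [hconst]
    refine intervalIntegral.integral_mono_on hab intervalIntegrable_const
      (intervalIntegral.intervalIntegrable_rpow' (by linarith)) ?_
    intro t ht
    exact Real.rpow_le_rpow_of_nonpos (lt_of_lt_of_le ha' ht.1) ht.2 (by linarith)

private lemma step2 (s a b : ℝ) (hs : 0 < s) (h1 : s ≤ 1) (ha : 0 < a) (hab : a ≤ b) :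
    (b ^ s - a ^ s) / s ≤ a ^ (s - 1) * (b - a) := by
  rw [← int_eq s a b hs]
  have hconst : a ^ (s - 1) * (b - a) = ∫ _ in a..b, a ^ (s - 1) := by
    rw [intervalIntegral.integral_const, smul_eq_mul]; ring
  rw [hconst]
  refine intervalIntegral.integral_mono_on hab
    (intervalIntegral.intervalIntegrable_rpow' (by linarith)) intervalIntegrable_const ?_
  intro t ht
  exact Real.rpow_le_rpow_of_nonpos ha ht.1 (by linarith)

private lemma step3 (s a b : ℝ) (h1 : 1 ≤ s) (ha : 0 ≤ a) (hab : a ≤ b) :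
    a ^ (s - 1) * (b - a) ≤ (b ^ s - a ^ s) / s := by
  have hs : 0 < s := lt_of_lt_of_le one_pos h1
  rw [← int_eq s a b hs]
  have hconst : a ^ (s - 1) * (b - a) = ∫ _ in a..b, a ^ (s - 1) := by
    rw [intervalIntegral.integral_const, smul_eq_mul]; ring
  rw [hconst]
  refine intervalIntegral.integral_mono_on hab intervalIntegrable_const
    (intervalIntegral.intervalIntegrable_rpow' (by linarith)) ?_
  intro t ht
  exact Real.rpow_le_rpow ha ht.1 (by linarith)

private lemma step4 (s a b : ℝ) (h1 : 1 ≤ s) (ha : 0 ≤ a) (hab : a ≤ b) :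
    (b ^ s - a ^ s) / s ≤ b ^ (s - 1) * (b - a) := by
  have hs : 0 < s := lt_of_lt_of_le one_pos h1
  rw [← int_eq s a b hs]
  have hconst : b ^ (s - 1) * (b - a) = ∫ _ in a..b, b ^ (s - 1) := by
    rw [intervalIntegral.integral_const, smul_eq_mul]; ring
  rw [hconst]
  refine intervalIntegral.integral_mono_on hab
    (intervalIntegral.intervalIntegrable_rpow' (by linarith)) intervalIntegrable_const ?_
  intro t ht
  exact Real.rpow_le_rpow (ha.trans ht.1) ht.2 (by linarith)

private lemma riemann (s : ℝ) (hs : 0 < s) :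
    Tendsto (fun k : ℕ => (∑ j ∈ Finset.Icc 1 k, ((j : ℝ) / (k : ℝ)) ^ (s - 1)) / (k : ℝ))
      atTop (nhds (1 / s)) := by
  -- lower and upper bounding sequences
  have hinv : Tendsto (fun k : ℕ => 1 / (k : ℝ)) atTop (nhds 0) :=
    tendsto_one_div_atTop_nhds_zero_nat
  have hrpow0 : Tendsto (fun k : ℕ => (1 / (k : ℝ)) ^ s) atTop (nhds 0) := by
    have hc : ContinuousAt (fun y : ℝ => y ^ s) 0 :=
      Real.continuousAt_rpow_const 0 s (Or.inr hs.le)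
    have := hc.tendsto.comp hinv
    simpa [Real.zero_rpow hs.ne', Function.comp_def] using this
  have hL : Tendsto (fun k : ℕ => (1 - (1 / (k : ℝ)) ^ s) / s) atTop (nhds (1 / s)) := by
    have := ((tendsto_const_nhds (x := (1:ℝ))).sub hrpow0).div_const s
    simpa using this
  have hU : Tendsto (fun k : ℕ => ((1 + 1 / (k : ℝ)) ^ s) / s) atTop (nhds (1 / s)) := by
    have hc : ContinuousAt (fun y : ℝ => y ^ s) 1 :=
      Real.continuousAt_rpow_const 1 s (Or.inl one_ne_zero)
    have h2 : Tendsto (fun k : ℕ => 1 + 1 / (k : ℝ)) atTop (nhds 1) := by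
      simpa using (tendsto_const_nhds (x := (1:ℝ))).add hinv
    have := (hc.tendsto.comp h2).div_const s
    simpa [Real.one_rpow] using this
  refine tendsto_of_tendsto_of_tendsto_of_le_of_le' hL hU ?_ ?_
  · -- lower bound eventually
    filter_upwards [eventually_ge_atTop 1] with k hk
    have hK : (0 : ℝ) < (k : ℝ) := by exact_mod_cast hk
    set g : ℕ → ℝ := fun j => ((j : ℝ) / (k : ℝ)) ^ s / s with hg
    have hsum : (∑ j ∈ Finset.Icc 1 k, ((j : ℝ) / (k : ℝ)) ^ (s - 1)) / (k : ℝ)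
        = ∑ i ∈ Finset.range k, (((i : ℝ) + 1) / (k : ℝ)) ^ (s - 1) * (1 / (k : ℝ)) := by
      rw [Finset.sum_div, ← Finset.Ico_add_one_right_eq_Icc, Finset.sum_Ico_eq_sum_range]
      refine Finset.sum_congr rfl fun i _ => ?_
      rw [add_comm 1 i]
      push_cast
      rw [div_eq_mul_one_div]
    rw [hsum]
    rcases le_total s 1 with h1 | h1
    · -- s ≤ 1 : decreasing, compare with intervals to the right
      have tele : ∑ i ∈ Finset.range k, (g (i + 2) - g (i + 1)) = g (k + 1) - g 1 :=
        Finset.sum_range_sub (fun i => g (i + 1)) k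
      have hterm : ∀ i ∈ Finset.range k,
          g (i + 2) - g (i + 1) ≤ (((i : ℝ) + 1) / (k : ℝ)) ^ (s - 1) * (1 / (k : ℝ)) := by
        intro i _
        have h := step2 s (((i : ℝ) + 1) / (k : ℝ)) (((i : ℝ) + 2) / (k : ℝ)) hs h1
          (by positivity) (by gcongr <;> norm_num)
        have hba : ((i : ℝ) + 2) / (k : ℝ) - ((i : ℝ) + 1) / (k : ℝ) = 1 / (k : ℝ) := by
          ring
        rw [hba] at h
        refine le_trans (le_of_eq ?_) h
        simp only [hg]
        push_cast
        ring
      have := le_trans (le_of_eq tele.symm) (Finset.sum_le_sum hterm)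
      refine le_trans ?_ this
      have h1le : (1 : ℝ) ≤ ((k : ℝ) + 1) / (k : ℝ) := by
        rw [le_div_iff₀ hK]; linarith
      have : (1 : ℝ) ^ s ≤ (((k : ℝ) + 1) / (k : ℝ)) ^ s :=
        Real.rpow_le_rpow zero_le_one h1le hs.le
      rw [Real.one_rpow] at this
      have hg1 : g 1 = (1 / (k : ℝ)) ^ s / s := by simp [hg]
      have hgk : g (k + 1) = (((k : ℝ) + 1) / (k : ℝ)) ^ s / s := by
        simp only [hg, Nat.cast_add, Nat.cast_one]
      rw [hg1, hgk]
      have h2 : (1 : ℝ) / s ≤ (((k : ℝ) + 1) / (k : ℝ)) ^ s / s := by gcongr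
      have h3 : (1 - (1 / (k : ℝ)) ^ s) / s = 1 / s - (1 / (k : ℝ)) ^ s / s := by ring
      linarith
    · -- 1 ≤ s : increasing, compare with intervals to the left
      have tele : ∑ i ∈ Finset.range k, (g (i + 1) - g i) = g k - g 0 :=
        Finset.sum_range_sub g k
      have hterm : ∀ i ∈ Finset.range k,
          g (i + 1) - g i ≤ (((i : ℝ) + 1) / (k : ℝ)) ^ (s - 1) * (1 / (k : ℝ)) := by
        intro i _
        have h := step4 s ((i : ℝ) / (k : ℝ)) (((i : ℝ) + 1) / (k : ℝ)) h1
          (by positivity) (by gcongr <;> norm_num)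
        have hba : ((i : ℝ) + 1) / (k : ℝ) - (i : ℝ) / (k : ℝ) = 1 / (k : ℝ) := by
          ring
        rw [hba] at h
        refine le_trans (le_of_eq ?_) h
        simp only [hg]
        push_cast
        ring
      have := le_trans (le_of_eq tele.symm) (Finset.sum_le_sum hterm)
      refine le_trans ?_ this
      have hgk : g k = 1 / s := by
        simp only [hg]
        rw [div_self hK.ne', Real.one_rpow]
      have hg0 : g 0 = 0 := by
        simp [hg, Real.zero_rpow hs.ne']
      rw [hgk, hg0, sub_zero]
      have : (0 : ℝ) ≤ (1 / (k : ℝ)) ^ s := Real.rpow_nonneg (by positivity) s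
      rw [div_le_div_iff₀ hs hs]
      nlinarith
  · -- upper bound eventually
    filter_upwards [eventually_ge_atTop 1] with k hk
    have hK : (0 : ℝ) < (k : ℝ) := by exact_mod_cast hk
    set g : ℕ → ℝ := fun j => ((j : ℝ) / (k : ℝ)) ^ s / s with hg
    have hsum : (∑ j ∈ Finset.Icc 1 k, ((j : ℝ) / (k : ℝ)) ^ (s - 1)) / (k : ℝ)
        = ∑ i ∈ Finset.range k, (((i : ℝ) + 1) / (k : ℝ)) ^ (s - 1) * (1 / (k : ℝ)) := by
      rw [Finset.sum_div, ← Finset.Ico_add_one_right_eq_Icc, Finset.sum_Ico_eq_sum_range]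
      refine Finset.sum_congr rfl fun i _ => ?_
      rw [add_comm 1 i]
      push_cast
      rw [div_eq_mul_one_div]
    rw [hsum]
    rcases le_total s 1 with h1 | h1
    · -- s ≤ 1 : sum ≤ 1/s ≤ (1+1/k)^s/s
      have tele : ∑ i ∈ Finset.range k, (g (i + 1) - g i) = g k - g 0 :=
        Finset.sum_range_sub g k
      have hterm : ∀ i ∈ Finset.range k,
          (((i : ℝ) + 1) / (k : ℝ)) ^ (s - 1) * (1 / (k : ℝ)) ≤ g (i + 1) - g i := by
        intro i _
        have h := step1 s ((i : ℝ) / (k : ℝ)) (((i : ℝ) + 1) / (k : ℝ)) hs h1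
          (by positivity) (by gcongr <;> norm_num) (by positivity)
        have hba : ((i : ℝ) + 1) / (k : ℝ) - (i : ℝ) / (k : ℝ) = 1 / (k : ℝ) := by
          ring
        rw [hba] at h
        refine le_trans h (le_of_eq ?_)
        simp only [hg]
        push_cast
        ring
      have := le_trans (Finset.sum_le_sum hterm) (le_of_eq tele)
      refine le_trans this ?_
      have hgk : g k = 1 / s := by
        simp only [hg]
        rw [div_self hK.ne', Real.one_rpow]
      have hg0 : g 0 = 0 := by
        simp [hg, Real.zero_rpow hs.ne']
      rw [hgk, hg0, sub_zero]
      have h1le : (1 : ℝ) ≤ 1 + 1 / (k : ℝ) := by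
        have : (0:ℝ) ≤ 1 / (k : ℝ) := by positivity
        linarith
      have : (1 : ℝ) ^ s ≤ (1 + 1 / (k : ℝ)) ^ s :=
        Real.rpow_le_rpow zero_le_one h1le hs.le
      rw [Real.one_rpow] at this
      gcongr
    · -- 1 ≤ s : sum ≤ g (k+1) - g 1 ≤ (1+1/k)^s/s
      have tele : ∑ i ∈ Finset.range k, (g (i + 2) - g (i + 1)) = g (k + 1) - g 1 :=
        Finset.sum_range_sub (fun i => g (i + 1)) k
      have hterm : ∀ i ∈ Finset.range k,
          (((i : ℝ) + 1) / (k : ℝ)) ^ (s - 1) * (1 / (k : ℝ)) ≤ g (i + 2) - g (i + 1) := by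
        intro i _
        have h := step3 s (((i : ℝ) + 1) / (k : ℝ)) (((i : ℝ) + 2) / (k : ℝ)) h1
          (by positivity) (by gcongr <;> norm_num)
        have hba : ((i : ℝ) + 2) / (k : ℝ) - ((i : ℝ) + 1) / (k : ℝ) = 1 / (k : ℝ) := by
          ring
        rw [hba] at h
        refine le_trans h (le_of_eq ?_)
        simp only [hg]
        push_cast
        ring
      have := le_trans (Finset.sum_le_sum hterm) (le_of_eq tele)
      refine le_trans this ?_
      have hg1 : (0 : ℝ) ≤ g 1 := by
        simp only [hg]
        positivity
      have hgk : g (k + 1) = ((1 + 1 / (k : ℝ)) ^ s) / s := by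
        simp only [hg, Nat.cast_add, Nat.cast_one]
        congr 2
        field_simp
      rw [hgk] at *
      linarith [tele]

/-- For even `m` and positive `c`, the Riemann sums
`(1/k) ∑_{j=1}^k (∑_i (j/k)^{c_i - 1/m} x_i)^m` converge to the Cauchy form at
every `x`; i.e. the Cauchy tensor is a limit of completely positive tensors. -/
theorem stmt_4 (m n : ℕ) (hm : 0 < m) (hn : 0 < n) (hme : Even m)
    (c : Fin n → ℝ) (hc : ∀ i, 0 < c i) (x : Fin n → ℝ) :
    Tendsto
      (fun k : ℕ =>
        (∑ j ∈ Finset.Icc 1 k,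
          (∑ i, ((j : ℝ) / (k : ℝ)) ^ (c i - 1 / (m : ℝ)) * x i) ^ m) / (k : ℝ))
      atTop
      (nhds (∑ f : Fin m → Fin n, (∏ j, x (f j)) / (∑ j, c (f j)))) := by
  have hm' : (m : ℝ) ≠ 0 := Nat.cast_ne_zero.2 hm.ne'
  have hTpos : ∀ f : Fin m → Fin n, 0 < ∑ j, c (f j) := by
    intro f
    refine Finset.sum_pos (fun j _ => hc (f j)) ?_
    exact Finset.univ_nonempty_iff.2 ⟨⟨0, hm⟩⟩
  have h1 : Tendsto
      (fun k : ℕ => ∑ f : Fin m → Fin n, (∏ j, x (f j)) *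
        ((∑ j ∈ Finset.Icc 1 k, ((j : ℝ) / (k : ℝ)) ^ ((∑ j, c (f j)) - 1)) / (k : ℝ)))
      atTop (nhds (∑ f : Fin m → Fin n, (∏ j, x (f j)) * (1 / (∑ j, c (f j))))) :=
    tendsto_finset_sum _ fun f _ => ((riemann _ (hTpos f)).const_mul _)
  have hval : (∑ f : Fin m → Fin n, (∏ j, x (f j)) * (1 / (∑ j, c (f j))))
      = ∑ f : Fin m → Fin n, (∏ j, x (f j)) / (∑ j, c (f j)) :=
    Finset.sum_congr rfl fun f _ => mul_one_div _ _
  rw [hval] at h1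
  refine Tendsto.congr' ?_ h1
  filter_upwards [eventually_ge_atTop 1] with k hk
  have hK : (0 : ℝ) < (k : ℝ) := by exact_mod_cast hk
  calc ∑ f : Fin m → Fin n, (∏ j, x (f j)) *
        ((∑ j ∈ Finset.Icc 1 k, ((j : ℝ) / (k : ℝ)) ^ ((∑ j, c (f j)) - 1)) / (k : ℝ))
      = ∑ f : Fin m → Fin n, ∑ j ∈ Finset.Icc 1 k,
        ((∏ jj, x (f jj)) * ((j : ℝ) / (k : ℝ)) ^ ((∑ jj, c (f jj)) - 1)) / (k : ℝ) := by
        refine Finset.sum_congr rfl fun f _ => ?_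
        rw [← mul_div_assoc, Finset.mul_sum, Finset.sum_div]
    _ = ∑ j ∈ Finset.Icc 1 k, ∑ f : Fin m → Fin n,
        ((∏ jj, x (f jj)) * ((j : ℝ) / (k : ℝ)) ^ ((∑ jj, c (f jj)) - 1)) / (k : ℝ) :=
        Finset.sum_comm
    _ = (∑ j ∈ Finset.Icc 1 k,
          (∑ i, ((j : ℝ) / (k : ℝ)) ^ (c i - 1 / (m : ℝ)) * x i) ^ m) / (k : ℝ) := by
        rw [Finset.sum_div]
        refine Finset.sum_congr rfl fun j hj => ?_
        rw [← Finset.sum_div]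
        congr 1
        have hj1 : 1 ≤ j := (Finset.mem_Icc.1 hj).1
        have ht : (0 : ℝ) < (j : ℝ) / (k : ℝ) := by
          apply div_pos _ hK
          exact_mod_cast hj1
        rw [Fintype.sum_pow]
        refine Finset.sum_congr rfl fun f _ => ?_
        rw [Finset.prod_mul_distrib]
        rw [← Real.rpow_sum_of_pos ht]
        have hexp : ∑ jj : Fin m, (c (f jj) - 1 / (m : ℝ)) = (∑ jj, c (f jj)) - 1 := by
          rw [Finset.sum_sub_distrib, Finset.sum_const, Finset.card_univ, Fintype.card_fin,
            nsmul_eq_mul]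
          field_simp
        rw [hexp]
        ring
end

section
/- Let b_1,...,b_n >= 0, d in N, and a_1,...,a_n nonnegative integers with sum 2d. Set mu_0 = 2d * product over i with a_i != 0 of (b_i/a_i)^{a_i/(2d)}. If |mu| <= mu_0, or if all a_i are even and mu <= mu_0, then f(x) = b_1 x_1^{2d} + ... + b_n x_n^{2d} - mu x_1^{a_1}...x_n^{a_n} is nonnegative on R^n. -/
open Finset

/-- Fidalgo–Kovacec AM–GM criterion: with `μ₀ = 2d ∏_{a_i ≠ 0} (b_i/a_i)^{a_i/(2d)}`,
if `|μ| ≤ μ₀`, or all `a_i` are even and `μ ≤ μ₀`, then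
`∑ b_i x_i^{2d} - μ ∏ x_i^{a_i} ≥ 0` on `ℝ^n`. -/
theorem stmt_5 (n d : ℕ) (hd : 0 < d) (b : Fin n → ℝ) (hb : ∀ i, 0 ≤ b i)
    (a : Fin n → ℕ) (ha : ∑ i, a i = 2 * d) (μ : ℝ)
    (hμ : |μ| ≤ (2 * d : ℝ) *
            ∏ i ∈ Finset.univ.filter (fun i => a i ≠ 0),
              (b i / (a i : ℝ)) ^ ((a i : ℝ) / (2 * d : ℝ))
          ∨ ((∀ i, Even (a i)) ∧
            μ ≤ (2 * d : ℝ) *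
              ∏ i ∈ Finset.univ.filter (fun i => a i ≠ 0),
                (b i / (a i : ℝ)) ^ ((a i : ℝ) / (2 * d : ℝ)))) :
    ∀ x : Fin n → ℝ,
      0 ≤ ∑ i, b i * x i ^ (2 * d) - μ * ∏ i, x i ^ a i := by
  intro x
  set s := Finset.univ.filter (fun i : Fin n => a i ≠ 0) with hs
  set μ₀ := (2 * d : ℝ) * ∏ i ∈ s, (b i / (a i : ℝ)) ^ ((a i : ℝ) / (2 * d : ℝ)) with hμ₀def
  have h2d : (0:ℝ) < 2 * d := by positivity
  have hμ₀nn : 0 ≤ μ₀ := by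
    apply mul_nonneg h2d.le
    exact Finset.prod_nonneg fun i _ => Real.rpow_nonneg (div_nonneg (hb i) (Nat.cast_nonneg _)) _
  have habs : (0:ℝ) ≤ ∏ i, |x i| ^ a i := Finset.prod_nonneg fun i _ => by positivity
  -- Key: μ₀ * ∏ |x i|^(a i) ≤ ∑ b i * x i^(2d)
  have key : μ₀ * ∏ i, |x i| ^ a i ≤ ∑ i, b i * x i ^ (2 * d) := by
    have hprod : ∏ i, |x i| ^ a i = ∏ i ∈ s, |x i| ^ a i := by
      refine (Finset.prod_subset (Finset.subset_univ s) fun i _ hi => ?_).symm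
      have : a i = 0 := by simpa [hs] using hi
      simp [this]
    have hsum : ∑ i ∈ s, ((a i : ℝ) / (2 * d)) = 1 := by
      rw [← Finset.sum_div]
      have : ∑ i ∈ s, (a i : ℝ) = ∑ i : Fin n, (a i : ℝ) := by
        refine Finset.sum_subset (Finset.subset_univ s) fun i _ hi => ?_
        have : a i = 0 := by simpa [hs] using hi
        simp [this]
      rw [this, show ∑ i : Fin n, (a i : ℝ) = 2 * d by exact_mod_cast ha]
      exact div_self h2d.ne'
    have hfac : ∀ i ∈ s, (b i / (a i : ℝ)) ^ ((a i : ℝ) / (2 * d)) * |x i| ^ a i =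
        ((b i / (a i : ℝ)) * |x i| ^ (2 * d)) ^ ((a i : ℝ) / (2 * d)) := by
      intro i hi
      have hbia : (0:ℝ) ≤ b i / (a i : ℝ) := div_nonneg (hb i) (Nat.cast_nonneg _)
      rw [Real.mul_rpow hbia (by positivity)]
      congr 1
      rw [← Real.rpow_natCast |x i| (2 * d), ← Real.rpow_mul (abs_nonneg _),
        ← Real.rpow_natCast |x i| (a i)]
      congr 1
      push_cast
      field_simp
    calc μ₀ * ∏ i, |x i| ^ a i
        = (2 * d : ℝ) * ∏ i ∈ s, ((b i / (a i : ℝ)) * |x i| ^ (2 * d)) ^ ((a i : ℝ) / (2 * d)) := by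
          rw [hμ₀def, hprod, mul_assoc, ← Finset.prod_mul_distrib,
            Finset.prod_congr rfl hfac]
      _ ≤ (2 * d : ℝ) * ∑ i ∈ s, ((a i : ℝ) / (2 * d)) * ((b i / (a i : ℝ)) * |x i| ^ (2 * d)) := by
          refine mul_le_mul_of_nonneg_left ?_ h2d.le
          exact Real.geom_mean_le_arith_mean_weighted s _ _
            (fun i _ => by positivity) hsum
            (fun i _ => mul_nonneg (div_nonneg (hb i) (Nat.cast_nonneg _)) (by positivity))
      _ = ∑ i ∈ s, b i * |x i| ^ (2 * d) := by
          rw [Finset.mul_sum]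
          refine Finset.sum_congr rfl fun i hi => ?_
          have hai : a i ≠ 0 := by simpa [hs] using hi
          have haiR : (a i : ℝ) ≠ 0 := Nat.cast_ne_zero.mpr hai
          field_simp
      _ = ∑ i ∈ s, b i * x i ^ (2 * d) := by
          refine Finset.sum_congr rfl fun i _ => ?_
          rw [(even_two_mul d).pow_abs]
      _ ≤ ∑ i, b i * x i ^ (2 * d) := by
          refine Finset.sum_le_sum_of_subset_of_nonneg (Finset.subset_univ s)
            fun i _ _ => ?_
          have : x i ^ (2 * d) = |x i| ^ (2 * d) := ((even_two_mul d).pow_abs _).symm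
          rw [this]
          exact mul_nonneg (hb i) (by positivity)
  -- Reduce goal to μ * ∏ x^a ≤ μ₀ * ∏ |x|^a
  have main : μ * ∏ i, x i ^ a i ≤ μ₀ * ∏ i, |x i| ^ a i := by
    rcases hμ with hμ1 | ⟨heven, hμ2⟩
    · calc μ * ∏ i, x i ^ a i ≤ |μ * ∏ i, x i ^ a i| := le_abs_self _
        _ = |μ| * ∏ i, |x i| ^ a i := by
            rw [abs_mul, Finset.abs_prod]
            simp [abs_pow]
        _ ≤ μ₀ * ∏ i, |x i| ^ a i := mul_le_mul_of_nonneg_right hμ1 habs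
    · have : ∏ i, x i ^ a i = ∏ i, |x i| ^ a i := by
        exact Finset.prod_congr rfl fun i _ => ((heven i).pow_abs _).symm
      rw [this]
      exact mul_le_mul_of_nonneg_right hμ2 habs
  linarith [key, main]
end

section
/- Let m be even and A a symmetric tensor of order m and dimension n that is diagonally dominated: for each i, a_{i...i} >= sum over (i_2,...,i_m) != (i,...,i) of |a_{i i_2 ... i_m}|. Then the associated form A x^m = sum a_{i_1...i_m} x_{i_1}...x_{i_m} is nonnegative on R^n. -/
open Finset

lemma amgm (m : ℕ) (hm : 0 < m) (y : Fin m → ℝ) (hy : ∀ j, 0 ≤ y j) :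
    ∏ j, y j ≤ (∑ j, y j ^ m) / m := by
  have hm' : (m : ℝ) ≠ 0 := Nat.cast_ne_zero.mpr hm.ne'
  have h := Real.geom_mean_le_arith_mean_weighted Finset.univ
    (fun _ : Fin m => (m : ℝ)⁻¹) (fun j => y j ^ m)
    (fun i _ => by positivity)
    (by simp [Finset.card_univ]; field_simp)
    (fun i _ => pow_nonneg (hy i) m)
  have key : ∀ j : Fin m, (y j ^ m) ^ ((m : ℝ)⁻¹) = y j := by
    intro j
    rw [← Real.rpow_natCast (y j) m, ← Real.rpow_mul (hy j)]
    field_simp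
    simp
  calc ∏ j, y j = ∏ j, (y j ^ m) ^ ((m : ℝ)⁻¹) := by simp [key]
    _ ≤ ∑ j, (m : ℝ)⁻¹ * y j ^ m := h
    _ = (∑ j, y j ^ m) / m := by rw [← Finset.mul_sum]; ring

lemma const_iff (m n : ℕ) (hm : 0 < m) (f : Fin m → Fin n) (σ : Equiv.Perm (Fin m)) :
    ((f ∘ σ) = fun _ => (f ∘ σ) ⟨0, hm⟩) ↔ (f = fun _ => f ⟨0, hm⟩) := by
  constructor
  · intro h
    funext k
    have h1 := congrFun h (σ.symm k)
    have h2 := congrFun h (σ.symm ⟨0, hm⟩)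
    simp only [Function.comp_apply, Equiv.apply_symm_apply] at h1 h2
    rw [h1, h2]
  · intro h
    funext k
    have h1 := congrFun h (σ k)
    have h2 := congrFun h (σ ⟨0, hm⟩)
    simp only [Function.comp_apply] at *
    rw [h1, ← h2]

/-- An even order symmetric diagonally dominated tensor has nonnegative
associated form. Indices are functions `Fin m → Fin n`; symmetry means
invariance under permutations of the `m` slots. -/
theorem stmt_7 (m n : ℕ) (hm : 0 < m) (hn : 0 < n) (hme : Even m)
    (a : (Fin m → Fin n) → ℝ)
    (hsym : ∀ (f : Fin m → Fin n) (σ : Equiv.Perm (Fin m)), a (f ∘ σ) = a f)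
    (hdom : ∀ i : Fin n,
      ∑ f ∈ Finset.univ.filter
          (fun f : Fin m → Fin n => f ⟨0, hm⟩ = i ∧ f ≠ fun _ => i), |a f|
        ≤ a (fun _ => i)) :
    ∀ x : Fin n → ℝ, 0 ≤ ∑ f : Fin m → Fin n, a f * ∏ j, x (f j) := by
  intro x
  set z0 : Fin m := ⟨0, hm⟩ with hz0
  have hm' : (m : ℝ) ≠ 0 := Nat.cast_ne_zero.mpr hm.ne'
  have hxm : ∀ i, 0 ≤ x i ^ m := fun i => hme.pow_nonneg _
  set ND : Finset (Fin m → Fin n) :=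
    Finset.univ.filter (fun f => ¬ f = fun _ => f z0) with hND
  set S : Fin n → ℝ := fun i =>
    ∑ f ∈ Finset.univ.filter
      (fun f : Fin m → Fin n => f z0 = i ∧ f ≠ fun _ => i), |a f| with hS
  -- split the sum
  rw [← Finset.sum_filter_add_sum_filter_not Finset.univ
       (fun f : Fin m → Fin n => f = fun _ => f z0)]
  -- diagonal part
  have hdiag : ∑ f ∈ Finset.univ.filter
      (fun f : Fin m → Fin n => f = fun _ => f z0), a f * ∏ j, x (f j)
      = ∑ i : Fin n, a (fun _ => i) * x i ^ m := by
    apply Finset.sum_nbij' (i := fun f => f z0) (j := fun i _ => i)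
    · intro f hf; exact Finset.mem_univ _
    · intro i hi
      simp only [Finset.mem_filter, Finset.mem_univ, true_and]
    · intro f hf
      simp only [Finset.mem_filter, Finset.mem_univ, true_and] at hf
      exact hf.symm
    · intro i hi; rfl
    · intro f hf
      simp only [Finset.mem_filter, Finset.mem_univ, true_and] at hf
      rw [← hf]
      congr 1
      rw [Finset.prod_congr rfl (fun j _ => by rw [hf]), Finset.prod_const,
        Finset.card_univ, Fintype.card_fin]
  -- fibering of ND sums
  have hfiber : ∑ f ∈ ND, |a f| * x (f z0) ^ m = ∑ i : Fin n, S i * x i ^ m := by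
    rw [← Finset.sum_fiberwise ND (fun f => f z0) (fun f => |a f| * x (f z0) ^ m)]
    apply Finset.sum_congr rfl
    intro i _
    have hset : ND.filter (fun f => f z0 = i)
        = Finset.univ.filter (fun f : Fin m → Fin n => f z0 = i ∧ f ≠ fun _ => i) := by
      ext f
      simp only [hND, Finset.mem_filter, Finset.mem_univ, true_and]
      constructor
      · rintro ⟨h1, h2⟩; exact ⟨h2, by rw [← h2]; exact h1⟩
      · rintro ⟨h1, h2⟩; exact ⟨by rw [h1]; exact h2, h1⟩
    rw [hset, hS, Finset.sum_mul]
    apply Finset.sum_congr rfl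
    intro f hf
    simp only [Finset.mem_filter] at hf
    rw [hf.2.1]
  -- slot invariance
  have hslot : ∀ j : Fin m, ∑ f ∈ ND, |a f| * x (f j) ^ m
      = ∑ f ∈ ND, |a f| * x (f z0) ^ m := by
    intro j
    apply Finset.sum_nbij' (i := fun f => f ∘ Equiv.swap z0 j)
      (j := fun f => f ∘ Equiv.swap z0 j)
    · intro f hf
      simp only [hND, Finset.mem_filter, Finset.mem_univ, true_and] at *
      rw [const_iff m n hm f (Equiv.swap z0 j)]
      exact hf
    · intro f hf
      simp only [hND, Finset.mem_filter, Finset.mem_univ, true_and] at *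
      rw [const_iff m n hm f (Equiv.swap z0 j)]
      exact hf
    · intro f hf
      funext k
      simp [Equiv.swap_apply_self]
    · intro f hf
      funext k
      simp [Equiv.swap_apply_self]
    · intro f hf
      rw [hsym f (Equiv.swap z0 j)]
      have hv : (f ∘ Equiv.swap z0 j) z0 = f j := by simp
      rw [hv]
  -- bound on nondiagonal part
  have hndbound : -∑ i : Fin n, S i * x i ^ m
      ≤ ∑ f ∈ ND, a f * ∏ j, x (f j) := by
    have step1 : ∀ f ∈ ND, -(|a f| * ((∑ j, x (f j) ^ m) / m))
        ≤ a f * ∏ j, x (f j) := by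
      intro f _
      have h1 : -(|a f| * ∏ j, |x (f j)|) ≤ a f * ∏ j, x (f j) := by
        have := neg_abs_le (a f * ∏ j, x (f j))
        rwa [abs_mul, abs_prod] at this
      refine le_trans (neg_le_neg ?_) h1
      apply mul_le_mul_of_nonneg_left _ (abs_nonneg _)
      have h2 := amgm m hm (fun j => |x (f j)|) (fun j => abs_nonneg _)
      have e : ∀ j : Fin m, |x (f j)| ^ m = x (f j) ^ m := fun j => hme.pow_abs _
      calc ∏ j, |x (f j)| ≤ (∑ j, |x (f j)| ^ m) / m := h2
        _ = (∑ j, x (f j) ^ m) / m := by rw [Finset.sum_congr rfl (fun j _ => e j)]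
    calc -∑ i : Fin n, S i * x i ^ m
        = ∑ f ∈ ND, -(|a f| * ((∑ j, x (f j) ^ m) / m)) := by
          have P : ∑ f ∈ ND, |a f| * ((∑ j, x (f j) ^ m) / m)
              = ∑ i : Fin n, S i * x i ^ m := by
            have e1 : ∑ f ∈ ND, |a f| * ((∑ j, x (f j) ^ m) / m)
                = (∑ f ∈ ND, ∑ j, |a f| * x (f j) ^ m) / m := by
              rw [Finset.sum_div]
              exact Finset.sum_congr rfl (fun f _ => by rw [← Finset.mul_sum]; ring)
            rw [e1, Finset.sum_comm]
            have e2 : ∀ j : Fin m, ∑ f ∈ ND, |a f| * x (f j) ^ m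
                = ∑ i : Fin n, S i * x i ^ m := fun j => by rw [hslot j, hfiber]
            rw [Finset.sum_congr rfl (fun j _ => e2 j), Finset.sum_const,
              Finset.card_univ, Fintype.card_fin, nsmul_eq_mul]
            field_simp
          rw [← P, ← Finset.sum_neg_distrib]
      _ ≤ ∑ f ∈ ND, a f * ∏ j, x (f j) := Finset.sum_le_sum step1
  rw [hdiag]
  have final : ∑ i : Fin n, S i * x i ^ m ≤ ∑ i : Fin n, a (fun _ => i) * x i ^ m :=
    Finset.sum_le_sum (fun i _ => mul_le_mul_of_nonneg_right (hdom i) (hxm i))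
  linarith
end

section
/- Any sum-of-squares homogeneous polynomial of degree m in n variables can be written as a sum of at most Lambda squares of homogeneous polynomials, where Lambda = (sqrt(1+8a)-1)/2 and a = binomial(n+m-1, m). -/
open Finset

section Aux

open Matrix

lemma clr_deg_sum {α : Type*} (d : α →₀ ℕ) : (d.sum fun _ => id) = d.degree := by
  simp [Finsupp.degree, Finsupp.sum]; rfl

noncomputable def clrDegEquivSym (n m : ℕ) :
    {d : Fin n →₀ ℕ // d.degree = m} ≃ Sym (Fin n) m where
  toFun d := ⟨Finsupp.toMultiset d.1, by rw [Finsupp.card_toMultiset, clr_deg_sum, d.2]⟩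
  invFun s := ⟨Multiset.toFinsupp s.1, by
    have := Finsupp.card_toMultiset (Multiset.toFinsupp s.1)
    rw [Multiset.toFinsupp_toMultiset, clr_deg_sum] at this
    rw [← this, s.2]⟩
  left_inv d := by ext : 1; simp
  right_inv s := by ext : 1; simp

noncomputable instance clrFintypeDeg (n m : ℕ) : Fintype {d : Fin n →₀ ℕ // d.degree = m} :=
  Fintype.ofEquiv _ (clrDegEquivSym n m).symm

noncomputable def clrBasisHomog (n m : ℕ) : Module.Basis {d : Fin n →₀ ℕ // d.degree = m} ℝ
    (MvPolynomial.homogeneousSubmodule (Fin n) ℝ m) := by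
  rw [MvPolynomial.homogeneousSubmodule_eq_finsupp_supported]
  exact MvPolynomial.basisRestrictSupport ℝ {d | d.degree = m}

lemma clr_finrank_homog (n m : ℕ) :
    Module.finrank ℝ (MvPolynomial.homogeneousSubmodule (Fin n) ℝ m) = (n + m - 1).choose m := by
  rw [Module.finrank_eq_card_basis (clrBasisHomog n m), Fintype.card_congr (clrDegEquivSym n m),
    Sym.card_sym_eq_multichoose, Fintype.card_fin, Nat.multichoose_eq]

instance clr_homog_finite (n m : ℕ) :
    Module.Finite ℝ (MvPolynomial.homogeneousSubmodule (Fin n) ℝ m) :=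
  Module.Finite.of_basis (clrBasisHomog n m)

lemma clr_S_conj {n k : ℕ} (g : Fin k → MvPolynomial (Fin n) ℝ)
    (U : Matrix (Fin k) (Fin k) ℝ) (d : Fin k → ℝ) :
    ∑ i, ∑ j, (U * Matrix.diagonal d * Uᵀ) i j • (g i * g j)
      = ∑ q, d q • (∑ i, U i q • g i) ^ 2 := by
  have expand : ∀ i j, (U * Matrix.diagonal d * Uᵀ) i j = ∑ q, U i q * d q * U j q := by
    intro i j
    rw [Matrix.mul_apply]
    simp_rw [Matrix.mul_diagonal, Matrix.transpose_apply]
  simp_rw [expand]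
  calc ∑ i, ∑ j, (∑ q, U i q * d q * U j q) • (g i * g j)
      = ∑ i, ∑ q, ∑ j, (U i q * d q * U j q) • (g i * g j) := by
        refine Finset.sum_congr rfl fun i _ => ?_
        simp_rw [Finset.sum_smul]
        exact Finset.sum_comm
    _ = ∑ q, ∑ i, ∑ j, (U i q * d q * U j q) • (g i * g j) := Finset.sum_comm
    _ = ∑ q, d q • (∑ i, U i q • g i) ^ 2 := by
        refine Finset.sum_congr rfl fun q _ => ?_
        rw [sq, Finset.sum_mul_sum, Finset.smul_sum]
        refine Finset.sum_congr rfl fun i _ => ?_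
        rw [Finset.smul_sum]
        refine Finset.sum_congr rfl fun j _ => ?_
        rw [smul_mul_smul_comm, smul_smul]
        congr 1; ring

lemma clr_sos_reduce {n k : ℕ} (g : Fin (k+1) → MvPolynomial (Fin n) ℝ)
    (C : Matrix (Fin (k+1)) (Fin (k+1)) ℝ) (hC : C.IsHermitian) (hC0 : C ≠ 0)
    (hrel : ∑ i, ∑ j, C i j • (g i * g j) = 0) :
    ∃ g' : Fin k → MvPolynomial (Fin n) ℝ,
      (∀ q, g' q ∈ Submodule.span ℝ (Set.range g)) ∧ ∑ q, g' q ^ 2 = ∑ i, g i ^ 2 := by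
  set U : Matrix (Fin (k+1)) (Fin (k+1)) ℝ := ↑hC.eigenvectorUnitary with hU
  set d := hC.eigenvalues with hd
  have hstar : star U = Uᵀ := by
    ext i j; simp [Matrix.star_apply]
  have hspec : C = U * Matrix.diagonal d * Uᵀ := by
    have := hC.spectral_theorem
    rw [Unitary.conjStarAlgAut_apply, ← hU, hstar] at this
    simpa using this
  have hUU : U * Uᵀ = 1 := by
    rw [← hstar]
    exact Matrix.mem_unitaryGroup_iff.mp hC.eigenvectorUnitary.2
  set h : Fin (k+1) → MvPolynomial (Fin n) ℝ := fun q => ∑ i, U i q • g i with hh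
  have h1 : ∑ q, h q ^ 2 = ∑ i, g i ^ 2 := by
    have := clr_S_conj g U (fun _ => 1)
    rw [Matrix.diagonal_one, mul_one, hUU] at this
    simp only [one_smul] at this
    have e1 : ∑ i, ∑ j, (1 : Matrix (Fin (k+1)) (Fin (k+1)) ℝ) i j • (g i * g j)
        = ∑ i, g i ^ 2 := by
      simp [Matrix.one_apply, ite_smul, sq]
    exact this.symm.trans e1
  have h2 : ∑ q, d q • h q ^ 2 = 0 := by rw [← clr_S_conj g U d, ← hspec, hrel]
  obtain ⟨p, hp⟩ : ∃ p, ∀ q, |d q| ≤ |d p| := Finite.exists_max fun q => |d q|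
  have hdp : d p ≠ 0 := by
    intro h0
    apply hC0
    have hdz : d = 0 := funext fun q =>
      abs_eq_zero.mp (le_antisymm (by simpa [h0] using hp q) (abs_nonneg _))
    rw [hspec, hdz, show Matrix.diagonal (0 : Fin (k+1) → ℝ) = 0 from Matrix.diagonal_zero,
      Matrix.mul_zero, Matrix.zero_mul]
  set e : Fin (k+1) → ℝ := fun q => 1 - d q / d p with he
  have he0 : ∀ q, 0 ≤ e q := by
    intro q
    have h1' : d q / d p ≤ |d q / d p| := le_abs_self _
    have h2' : |d q / d p| ≤ 1 := by
      rw [abs_div]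
      exact div_le_one_of_le₀ (hp q) (abs_nonneg _)
    simp only [he]; linarith
  have hep : e p = 0 := by simp [he, div_self hdp]
  have h3 : ∑ q, e q • h q ^ 2 = ∑ i, g i ^ 2 := by
    have key : ∑ q, e q • h q ^ 2 = ∑ q, h q ^ 2 - (d p)⁻¹ • ∑ q, d q • h q ^ 2 := by
      rw [Finset.smul_sum, ← Finset.sum_sub_distrib]
      refine Finset.sum_congr rfl fun q _ => ?_
      rw [smul_smul, he, sub_smul, one_smul]
      congr 2
      ring
    rw [key, h2, smul_zero, sub_zero, h1]
  refine ⟨fun q' => Real.sqrt (e (p.succAbove q')) • h (p.succAbove q'), ?_, ?_⟩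
  · intro q'
    exact Submodule.smul_mem _ _ (Submodule.sum_mem _ fun i _ =>
      Submodule.smul_mem _ _ (Submodule.subset_span ⟨i, rfl⟩))
  · have key : ∀ q', (Real.sqrt (e (p.succAbove q')) • h (p.succAbove q'))^2
        = e (p.succAbove q') • h (p.succAbove q')^2 := fun q' => by
      rw [smul_pow, Real.sq_sqrt (he0 _)]
    rw [Finset.sum_congr rfl fun q' _ => key q', ← h3,
      Fin.sum_univ_succAbove (fun q => e q • h q ^ 2) p, hep, zero_smul, zero_add]

lemma clr_num_bound {k a : ℕ} (h : (k + 2).choose 2 ≤ a) :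
    ((k : ℝ) + 1) ≤ (Real.sqrt (1 + 8 * a) - 1) / 2 := by
  have h2 : (k + 2) * (k + 1) ≤ 2 * a := by
    have hc : (k + 2).choose 2 = (k + 2) * (k + 1) / 2 := by
      rw [Nat.choose_two_right, show k + 2 - 1 = k + 1 from by omega]
    obtain ⟨c2, hc2⟩ : Even ((k + 2) * (k + 1)) := by
      rw [mul_comm]; exact Nat.even_mul_succ_self (k + 1)
    omega
  have h2' : ((k : ℝ) + 2) * ((k : ℝ) + 1) ≤ 2 * a := by exact_mod_cast h2
  have hs : (2 * (k : ℝ) + 3) ≤ Real.sqrt (1 + 8 * a) := by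
    have : (2 * (k : ℝ) + 3) = Real.sqrt ((2 * (k : ℝ) + 3) ^ 2) := by
      rw [Real.sqrt_sq (by positivity)]
    rw [this]
    apply Real.sqrt_le_sqrt
    nlinarith
  linarith

lemma clr_main_aux (n m : ℕ) (hm2 : m / 2 + m / 2 = m) :
    ∀ (k : ℕ) (g : Fin k → MvPolynomial (Fin n) ℝ),
      (∀ i, (g i).IsHomogeneous (m / 2)) →
      ∃ (r : ℕ) (g' : Fin r → MvPolynomial (Fin n) ℝ),
        (∀ i, (g' i).IsHomogeneous (m / 2)) ∧ (∑ i, g i ^ 2 = ∑ i, (g' i) ^ 2) ∧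
        (r : ℝ) ≤ (Real.sqrt (1 + 8 * ((n + m - 1).choose m : ℝ)) - 1) / 2 := by
  intro k
  induction k with
  | zero =>
    intro g hg
    refine ⟨0, g, hg, rfl, ?_⟩
    have : (1 : ℝ) ≤ Real.sqrt (1 + 8 * ((n + m - 1).choose m : ℝ)) := by
      rw [show (1:ℝ) = Real.sqrt 1 from Real.sqrt_one.symm]
      apply Real.sqrt_le_sqrt
      have h8 : (0:ℝ) ≤ ((n + m - 1).choose m : ℝ) := Nat.cast_nonneg _
      rw [Real.sqrt_one]
      linarith
    push_cast
    linarith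
  | succ k IH =>
    intro g hg
    by_cases hcard : (k + 2).choose 2 ≤ (n + m - 1).choose m
    · exact ⟨k + 1, g, hg, rfl, by push_cast; exact clr_num_bound hcard⟩
    · classical
      -- products are linearly dependent
      set V := MvPolynomial.homogeneousSubmodule (Fin n) ℝ m with hV
      have hmemV : ∀ i j : Fin (k+1), g i * g j ∈ V := fun i j => by
        rw [hV, MvPolynomial.mem_homogeneousSubmodule]
        have := (hg i).mul (hg j)
        rwa [hm2] at this
      set ι := {p : Fin (k+1) × Fin (k+1) // p.1 ≤ p.2} with hι
      have hcardι : Fintype.card ι = (k + 2).choose 2 := by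
        rw [← Fintype.card_congr (Sym2.sortEquiv (α := Fin (k+1))), Sym2.card, Fintype.card_fin]
      set v : ι → V := fun p => ⟨g p.1.1 * g p.1.2, hmemV _ _⟩ with hv
      have hdep : ¬ LinearIndependent ℝ v := by
        intro hli
        have := hli.fintype_card_le_finrank
        rw [hcardι, clr_finrank_homog] at this
        omega
      obtain ⟨c, hcsum, p₀, hcp₀⟩ := Fintype.not_linearIndependent_iff.mp hdep
      have hcsum' : ∑ p : ι, c p • (g p.1.1 * g p.1.2) = 0 := by
        have := congrArg (fun x : V => (x : MvPolynomial (Fin n) ℝ)) hcsum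
        simpa [hv] using this
      set B : Matrix (Fin (k+1)) (Fin (k+1)) ℝ :=
        fun i j => if hij : i ≤ j then c ⟨(i, j), hij⟩ else 0 with hB
      have hSB : ∑ i, ∑ j, B i j • (g i * g j) = 0 := by
        rw [← hcsum', ← Finset.sum_product']
        rw [← Finset.sum_filter_add_sum_filter_not (univ ×ˢ univ) (fun p => p.1 ≤ p.2)]
        have hzero : ∑ p ∈ (univ ×ˢ univ).filter (fun p => ¬ p.1 ≤ p.2),
            B p.1 p.2 • (g p.1 * g p.2) = 0 :=
          Finset.sum_eq_zero fun p hp => by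
            simp only [Finset.mem_filter] at hp
            simp [hB, hp.2]
        rw [hzero, add_zero]
        rw [Finset.sum_subtype ((univ ×ˢ univ).filter (fun p => p.1 ≤ p.2))
          (p := fun p => p.1 ≤ p.2) (fun x => by simp)
          (fun p => B p.1 p.2 • (g p.1 * g p.2))]
        refine Finset.sum_congr rfl fun p _ => ?_
        simp [hB, p.2]
      have hSBt : ∑ i, ∑ j, Bᵀ i j • (g i * g j) = ∑ i, ∑ j, B i j • (g i * g j) := by
        rw [Finset.sum_comm]
        exact Finset.sum_congr rfl fun j _ => Finset.sum_congr rfl fun i _ => by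
          rw [Matrix.transpose_apply, mul_comm]
      set C : Matrix (Fin (k+1)) (Fin (k+1)) ℝ := (2⁻¹ : ℝ) • (B + Bᵀ) with hC
      have hCh : C.IsHermitian := by
        rw [Matrix.IsHermitian]
        ext i j
        simp [hC, Matrix.conjTranspose_apply, Matrix.smul_apply, Matrix.add_apply,
          Matrix.transpose_apply, add_comm]
      have hCrel : ∑ i, ∑ j, C i j • (g i * g j) = 0 := by
        have expand : ∀ i j : Fin (k+1), C i j • (g i * g j)
            = (2⁻¹ : ℝ) • (B i j • (g i * g j)) + (2⁻¹ : ℝ) • (Bᵀ i j • (g i * g j)) := by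
          intro i j
          rw [hC]
          simp only [Matrix.smul_apply, Matrix.add_apply, smul_eq_mul]
          rw [smul_smul, smul_smul, ← add_smul, mul_add]
        simp_rw [expand, Finset.sum_add_distrib, ← Finset.smul_sum]
        rw [hSBt, hSB, smul_zero, add_zero]
      have hC0 : C ≠ 0 := by
        intro h0
        apply hcp₀
        have hij := p₀.2
        have hCval := congrFun (congrFun h0 p₀.1.1) p₀.1.2
        rw [hC] at hCval
        simp only [Matrix.smul_apply, Matrix.add_apply, Matrix.transpose_apply,
          Matrix.zero_apply, smul_eq_mul] at hCval
        simp only [hB] at hCval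
        rw [dif_pos hij] at hCval
        by_cases heq : p₀.1.1 = p₀.1.2
        · rw [dif_pos (heq ▸ le_refl _)] at hCval
          have hpp : (⟨(p₀.1.1, p₀.1.2), hij⟩ : ι) = p₀ := Subtype.ext (Prod.ext rfl rfl)
          have hpp2 : (⟨(p₀.1.2, p₀.1.1), heq ▸ le_refl _⟩ : ι) = p₀ := by
            apply Subtype.ext
            exact Prod.ext heq.symm heq
          rw [hpp, hpp2] at hCval
          linarith
        · have hnle : ¬ p₀.1.2 ≤ p₀.1.1 := fun hle => heq (le_antisymm hij hle)
          rw [dif_neg hnle, add_zero] at hCval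
          have hpp : (⟨(p₀.1.1, p₀.1.2), hij⟩ : ι) = p₀ := Subtype.ext (Prod.ext rfl rfl)
          rw [hpp] at hCval
          linarith
      obtain ⟨g', hg'span, hg'sum⟩ := clr_sos_reduce g C hCh hC0 hCrel
      have hg'h : ∀ q, (g' q).IsHomogeneous (m / 2) := by
        intro q
        have hsub : Submodule.span ℝ (Set.range g)
            ≤ MvPolynomial.homogeneousSubmodule (Fin n) ℝ (m / 2) := by
          rw [Submodule.span_le]
          rintro x ⟨i, rfl⟩
          rw [SetLike.mem_coe, MvPolynomial.mem_homogeneousSubmodule]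
          exact hg i
        exact (MvPolynomial.mem_homogeneousSubmodule _ _).mp (hsub (hg'span q))
      obtain ⟨r, g'', h1, h2, h3⟩ := IH g' hg'h
      exact ⟨r, g'', h1, by rw [← hg'sum, h2], h3⟩

end Aux

/-- Choi–Lam–Reznick bound on SOS-rank: any SOS homogeneous form of degree `m`
in `n` variables is a sum of at most `Λ = (√(1+8a)-1)/2` squares of homogeneous
forms, where `a = C(n+m-1, m)`. -/
theorem stmt_11 (n m : ℕ) (hme : Even m) (f : MvPolynomial (Fin n) ℝ)
    (hf : f.IsHomogeneous m)
    (hsos : ∃ (k : ℕ) (g : Fin k → MvPolynomial (Fin n) ℝ),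
      (∀ i, (g i).IsHomogeneous (m / 2)) ∧ f = ∑ i, (g i) ^ 2) :
    ∃ (r : ℕ) (g : Fin r → MvPolynomial (Fin n) ℝ),
      (∀ i, (g i).IsHomogeneous (m / 2)) ∧ f = ∑ i, (g i) ^ 2 ∧
      (r : ℝ) ≤ (Real.sqrt (1 + 8 * ((n + m - 1).choose m : ℝ)) - 1) / 2 := by
  obtain ⟨k, g, hg, hfg⟩ := hsos
  have hm2 : m / 2 + m / 2 = m := by
    obtain ⟨t, ht⟩ := hme
    omega
  obtain ⟨r, g', h1, h2, h3⟩ := clr_main_aux n m hm2 k g hg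
  exact ⟨r, g', h1, by rw [hfg, h2], h3⟩
end

section
/- The quartic form x_1^2 x_2^2 + x_2^2 x_3^2 + x_3^2 x_1^2 cannot be written as a sum of two squares of real quadratic forms in x_1, x_2, x_3 (but it is a sum of three squares). Hence its SOS-rank equals 3. -/
open Finset MvPolynomial

lemma deg3 (m : Fin 3 →₀ ℕ) : m.degree = m 0 + m 1 + m 2 := by
  rw [Finsupp.degree_apply, Finset.sum_subset (Finset.subset_univ _)
    (fun x _ hx => Finsupp.notMem_support_iff.mp hx), Fin.sum_univ_three]

lemma fin3_ext (m m' : Fin 3 →₀ ℕ) : m = m' ↔ m 0 = m' 0 ∧ m 1 = m' 1 ∧ m 2 = m' 2 := by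
  constructor
  · rintro rfl; exact ⟨rfl, rfl, rfl⟩
  · rintro ⟨h0, h1, h2⟩; ext i; fin_cases i <;> assumption

lemma quad_repr (q : MvPolynomial (Fin 3) ℝ) (hq : q.IsHomogeneous 2) :
    ∃ a b c d e f : ℝ, q =
      C a * (X 0 * X 1) + C b * (X 1 * X 2) + C c * (X 2 * X 0) +
      C d * X 0 ^ 2 + C e * X 1 ^ 2 + C f * X 2 ^ 2 := by
  have key : ∃ a b c d e f : ℝ, q =
      monomial (Finsupp.single 0 1 + Finsupp.single 1 1) a +
      monomial (Finsupp.single 1 1 + Finsupp.single 2 1) b +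
      monomial (Finsupp.single 2 1 + Finsupp.single 0 1) c +
      monomial (Finsupp.single 0 2) d +
      monomial (Finsupp.single 1 2) e +
      monomial (Finsupp.single 2 2) f := by
    refine ⟨coeff (Finsupp.single 0 1 + Finsupp.single 1 1) q,
      coeff (Finsupp.single 1 1 + Finsupp.single 2 1) q,
      coeff (Finsupp.single 2 1 + Finsupp.single 0 1) q,
      coeff (Finsupp.single 0 2) q, coeff (Finsupp.single 1 2) q,
      coeff (Finsupp.single 2 2) q, ?_⟩
    ext m
    simp only [coeff_add, coeff_monomial]
    have hm : m 0 + m 1 + m 2 ≠ 2 → coeff m q = 0 := by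
      intro h; exact hq.coeff_eq_zero (by rw [deg3]; exact h)
    have e1 : ((Finsupp.single 0 1 + Finsupp.single 1 1 : Fin 3 →₀ ℕ) = m) ↔
        m 0 = 1 ∧ m 1 = 1 ∧ m 2 = 0 := by
      rw [eq_comm, fin3_ext]; simp [Finsupp.single_apply]
    have e2 : ((Finsupp.single 1 1 + Finsupp.single 2 1 : Fin 3 →₀ ℕ) = m) ↔
        m 0 = 0 ∧ m 1 = 1 ∧ m 2 = 1 := by
      rw [eq_comm, fin3_ext]; simp [Finsupp.single_apply]
    have e3 : ((Finsupp.single 2 1 + Finsupp.single 0 1 : Fin 3 →₀ ℕ) = m) ↔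
        m 0 = 1 ∧ m 1 = 0 ∧ m 2 = 1 := by
      rw [eq_comm, fin3_ext]; simp [Finsupp.single_apply]
    have e4 : ((Finsupp.single 0 2 : Fin 3 →₀ ℕ) = m) ↔ m 0 = 2 ∧ m 1 = 0 ∧ m 2 = 0 := by
      rw [eq_comm, fin3_ext]; simp [Finsupp.single_apply]
    have e5 : ((Finsupp.single 1 2 : Fin 3 →₀ ℕ) = m) ↔ m 0 = 0 ∧ m 1 = 2 ∧ m 2 = 0 := by
      rw [eq_comm, fin3_ext]; simp [Finsupp.single_apply]
    have e6 : ((Finsupp.single 2 2 : Fin 3 →₀ ℕ) = m) ↔ m 0 = 0 ∧ m 1 = 0 ∧ m 2 = 2 := by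
      rw [eq_comm, fin3_ext]; simp [Finsupp.single_apply]
    simp only [e1, e2, e3, e4, e5, e6]
    by_cases h0 : m 0 = 1 ∧ m 1 = 1 ∧ m 2 = 0
    · simp only [if_pos h0, if_neg (by omega : ¬(m 0 = 0 ∧ m 1 = 1 ∧ m 2 = 1)), if_neg (by omega : ¬(m 0 = 1 ∧ m 1 = 0 ∧ m 2 = 1)), if_neg (by omega : ¬(m 0 = 2 ∧ m 1 = 0 ∧ m 2 = 0)), if_neg (by omega : ¬(m 0 = 0 ∧ m 1 = 2 ∧ m 2 = 0)), if_neg (by omega : ¬(m 0 = 0 ∧ m 1 = 0 ∧ m 2 = 2))]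
      rw [← e1.mpr h0]
      ring
    by_cases h1 : m 0 = 0 ∧ m 1 = 1 ∧ m 2 = 1
    · simp only [if_neg (by omega : ¬(m 0 = 1 ∧ m 1 = 1 ∧ m 2 = 0)), if_pos h1, if_neg (by omega : ¬(m 0 = 1 ∧ m 1 = 0 ∧ m 2 = 1)), if_neg (by omega : ¬(m 0 = 2 ∧ m 1 = 0 ∧ m 2 = 0)), if_neg (by omega : ¬(m 0 = 0 ∧ m 1 = 2 ∧ m 2 = 0)), if_neg (by omega : ¬(m 0 = 0 ∧ m 1 = 0 ∧ m 2 = 2))]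
      rw [← e2.mpr h1]
      ring
    by_cases h2 : m 0 = 1 ∧ m 1 = 0 ∧ m 2 = 1
    · simp only [if_neg (by omega : ¬(m 0 = 1 ∧ m 1 = 1 ∧ m 2 = 0)), if_neg (by omega : ¬(m 0 = 0 ∧ m 1 = 1 ∧ m 2 = 1)), if_pos h2, if_neg (by omega : ¬(m 0 = 2 ∧ m 1 = 0 ∧ m 2 = 0)), if_neg (by omega : ¬(m 0 = 0 ∧ m 1 = 2 ∧ m 2 = 0)), if_neg (by omega : ¬(m 0 = 0 ∧ m 1 = 0 ∧ m 2 = 2))]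
      rw [← e3.mpr h2]
      ring
    by_cases h3 : m 0 = 2 ∧ m 1 = 0 ∧ m 2 = 0
    · simp only [if_neg (by omega : ¬(m 0 = 1 ∧ m 1 = 1 ∧ m 2 = 0)), if_neg (by omega : ¬(m 0 = 0 ∧ m 1 = 1 ∧ m 2 = 1)), if_neg (by omega : ¬(m 0 = 1 ∧ m 1 = 0 ∧ m 2 = 1)), if_pos h3, if_neg (by omega : ¬(m 0 = 0 ∧ m 1 = 2 ∧ m 2 = 0)), if_neg (by omega : ¬(m 0 = 0 ∧ m 1 = 0 ∧ m 2 = 2))]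
      rw [← e4.mpr h3]
      ring
    by_cases h4 : m 0 = 0 ∧ m 1 = 2 ∧ m 2 = 0
    · simp only [if_neg (by omega : ¬(m 0 = 1 ∧ m 1 = 1 ∧ m 2 = 0)), if_neg (by omega : ¬(m 0 = 0 ∧ m 1 = 1 ∧ m 2 = 1)), if_neg (by omega : ¬(m 0 = 1 ∧ m 1 = 0 ∧ m 2 = 1)), if_neg (by omega : ¬(m 0 = 2 ∧ m 1 = 0 ∧ m 2 = 0)), if_pos h4, if_neg (by omega : ¬(m 0 = 0 ∧ m 1 = 0 ∧ m 2 = 2))]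
      rw [← e5.mpr h4]
      ring
    by_cases h5 : m 0 = 0 ∧ m 1 = 0 ∧ m 2 = 2
    · simp only [if_neg (by omega : ¬(m 0 = 1 ∧ m 1 = 1 ∧ m 2 = 0)), if_neg (by omega : ¬(m 0 = 0 ∧ m 1 = 1 ∧ m 2 = 1)), if_neg (by omega : ¬(m 0 = 1 ∧ m 1 = 0 ∧ m 2 = 1)), if_neg (by omega : ¬(m 0 = 2 ∧ m 1 = 0 ∧ m 2 = 0)), if_neg (by omega : ¬(m 0 = 0 ∧ m 1 = 2 ∧ m 2 = 0)), if_pos h5]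
      rw [← e6.mpr h5]
      ring
    rw [hm (by omega)]
    rw [if_neg (by omega : ¬(m 0 = 1 ∧ m 1 = 1 ∧ m 2 = 0)), if_neg (by omega : ¬(m 0 = 0 ∧ m 1 = 1 ∧ m 2 = 1)), if_neg (by omega : ¬(m 0 = 1 ∧ m 1 = 0 ∧ m 2 = 1)), if_neg (by omega : ¬(m 0 = 2 ∧ m 1 = 0 ∧ m 2 = 0)), if_neg (by omega : ¬(m 0 = 0 ∧ m 1 = 2 ∧ m 2 = 0)), if_neg (by omega : ¬(m 0 = 0 ∧ m 1 = 0 ∧ m 2 = 2))]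
    ring
  obtain ⟨a, b, c, d, e, f, h⟩ := key
  refine ⟨a, b, c, d, e, f, h.trans ?_⟩
  rw [show (X 0 * X 1 : MvPolynomial (Fin 3) ℝ)
        = monomial (Finsupp.single 0 1 + Finsupp.single 1 1) 1 by
        rw [X, X, monomial_mul, one_mul],
      show (X 1 * X 2 : MvPolynomial (Fin 3) ℝ)
        = monomial (Finsupp.single 1 1 + Finsupp.single 2 1) 1 by
        rw [X, X, monomial_mul, one_mul],
      show (X 2 * X 0 : MvPolynomial (Fin 3) ℝ)
        = monomial (Finsupp.single 2 1 + Finsupp.single 0 1) 1 by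
        rw [X, X, monomial_mul, one_mul],
      X_pow_eq_monomial, X_pow_eq_monomial, X_pow_eq_monomial, C_apply,
      C_apply, C_apply, C_apply, C_apply, C_apply]
  rw [monomial_mul, monomial_mul, monomial_mul, monomial_mul, monomial_mul, monomial_mul]
  simp


lemma sos2_aux (a₁ b₁ c₁ d₁ e₁ f₁ a₂ b₂ c₂ d₂ e₂ f₂ : ℝ)
    (key : ∀ x y z : ℝ, x^2*y^2 + y^2*z^2 + z^2*x^2 =
      (a₁*(x*y) + b₁*(y*z) + c₁*(z*x) + d₁*x^2 + e₁*y^2 + f₁*z^2)^2 +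
      (a₂*(x*y) + b₂*(y*z) + c₂*(z*x) + d₂*x^2 + e₂*y^2 + f₂*z^2)^2) : False := by
  have k100 := key 1 0 0
  have k010 := key 0 1 0
  have k001 := key 0 0 1
  have hd1 : d₁ = 0 := by nlinarith [sq_nonneg d₁, sq_nonneg d₂]
  have hd2 : d₂ = 0 := by nlinarith [sq_nonneg d₁, sq_nonneg d₂]
  have he1 : e₁ = 0 := by nlinarith [sq_nonneg e₁, sq_nonneg e₂]
  have he2 : e₂ = 0 := by nlinarith [sq_nonneg e₁, sq_nonneg e₂]
  have hf1 : f₁ = 0 := by nlinarith [sq_nonneg f₁, sq_nonneg f₂]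
  have hf2 : f₂ = 0 := by nlinarith [sq_nonneg f₁, sq_nonneg f₂]
  subst hd1 hd2 he1 he2 hf1 hf2
  have hA : a₁^2 + a₂^2 = 1 := by linear_combination -(key 1 1 0)
  have hB : b₁^2 + b₂^2 = 1 := by linear_combination -(key 0 1 1)
  have hC : c₁^2 + c₂^2 = 1 := by linear_combination -(key 1 0 1)
  have hAB : a₁*b₁ + a₂*b₂ = 0 := by
    linear_combination (-(key 1 1 1) - key 1 (-1) 1 + 2*(key 1 1 0) + 2*(key 0 1 1) + 2*(key 1 0 1))/4
  have hBC : b₁*c₁ + b₂*c₂ = 0 := by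
    linear_combination (-(key 1 1 1) - key 1 1 (-1) + 2*(key 1 1 0) + 2*(key 0 1 1) + 2*(key 1 0 1))/4
  have hAC : a₁*c₁ + a₂*c₂ = 0 := by
    linear_combination (-(key 1 1 1) - key (-1) 1 1 + 2*(key 1 1 0) + 2*(key 0 1 1) + 2*(key 1 0 1))/4
  have hu : (a₁*b₂ - a₂*b₁)^2 = 1 := by
    linear_combination (b₁^2 + b₂^2)*hA + hB - (a₁*b₁+a₂*b₂)*hAB
  have hv : (a₁*c₂ - a₂*c₁)^2 = 1 := by
    linear_combination (c₁^2 + c₂^2)*hA + hC - (a₁*c₁+a₂*c₂)*hAC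
  have huv : (a₁*b₂ - a₂*b₁) * (a₁*c₂ - a₂*c₁) = 0 := by
    linear_combination (b₁*c₁ + b₂*c₂)*hA + hBC - (a₁*c₁+a₂*c₂)*hAB
  have : (1:ℝ) = 0 := by
    calc (1:ℝ) = (a₁*b₂ - a₂*b₁)^2 * (a₁*c₂ - a₂*c₁)^2 := by rw [hu, hv]; ring
    _ = ((a₁*b₂ - a₂*b₁) * (a₁*c₂ - a₂*c₁))^2 := by ring
    _ = 0 := by rw [huv]; ring
  exact one_ne_zero this

/-- The quartic `x₁²x₂² + x₂²x₃² + x₃²x₁²` is not a sum of two squares of real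
quadratic forms, but is a sum of three such squares: its SOS-rank is 3. -/
theorem stmt_12 :
    (¬ ∃ q₁ q₂ : MvPolynomial (Fin 3) ℝ,
        q₁.IsHomogeneous 2 ∧ q₂.IsHomogeneous 2 ∧
        (X 0 ^ 2 * X 1 ^ 2 + X 1 ^ 2 * X 2 ^ 2 + X 2 ^ 2 * X 0 ^ 2
          : MvPolynomial (Fin 3) ℝ) = q₁ ^ 2 + q₂ ^ 2) ∧
    (∃ q₁ q₂ q₃ : MvPolynomial (Fin 3) ℝ,
        q₁.IsHomogeneous 2 ∧ q₂.IsHomogeneous 2 ∧ q₃.IsHomogeneous 2 ∧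
        (X 0 ^ 2 * X 1 ^ 2 + X 1 ^ 2 * X 2 ^ 2 + X 2 ^ 2 * X 0 ^ 2
          : MvPolynomial (Fin 3) ℝ) = q₁ ^ 2 + q₂ ^ 2 + q₃ ^ 2) := by
  constructor
  · rintro ⟨q₁, q₂, hq1, hq2, heq⟩
    obtain ⟨a₁, b₁, c₁, d₁, e₁, f₁, h1⟩ := quad_repr q₁ hq1
    obtain ⟨a₂, b₂, c₂, d₂, e₂, f₂, h2⟩ := quad_repr q₂ hq2
    rw [h1, h2] at heq
    refine sos2_aux a₁ b₁ c₁ d₁ e₁ f₁ a₂ b₂ c₂ d₂ e₂ f₂ (fun x y z => ?_)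
    have h' := congrArg (eval ![x, y, z]) heq
    simp only [map_add, map_mul, map_pow, eval_C, eval_X, Matrix.cons_val_zero,
      Matrix.cons_val_one, Matrix.head_cons, Matrix.cons_val_two, Matrix.tail_cons] at h'
    linear_combination h'
  · exact ⟨X 0 * X 1, X 1 * X 2, X 2 * X 0,
      (isHomogeneous_X ℝ 0).mul (isHomogeneous_X ℝ 1),
      (isHomogeneous_X ℝ 1).mul (isHomogeneous_X ℝ 2),
      (isHomogeneous_X ℝ 2).mul (isHomogeneous_X ℝ 0), by ring⟩
end

section
/- Let m be even and A a symmetric order-m dimension-n tensor with associated form f_A(x) = A x^m. Then the minimum H-eigenvalue of A equals the minimum of f_A(x) over the set {x : sum_i |x_i|^m = 1}, and also equals min over nonzero x of f_A(x)/||x||_m^m where ||x||_m = (sum_i |x_i|^m)^{1/m}. -/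
open Finset

section QiAux

variable {m n : ℕ}

private lemma tF_smul (a : (Fin m → Fin n) → ℝ) (c : ℝ) (x : Fin n → ℝ) :
    ∑ f : Fin m → Fin n, a f * ∏ j, (c * x (f j)) =
      c ^ m * ∑ f : Fin m → Fin n, a f * ∏ j, x (f j) := by
  rw [Finset.mul_sum]
  refine Finset.sum_congr rfl fun f _ => ?_
  rw [Finset.prod_mul_distrib, Finset.prod_const]
  simp [Finset.card_univ]
  ring

private lemma tF_cont (a : (Fin m → Fin n) → ℝ) :
    Continuous (fun x : Fin n → ℝ => ∑ f : Fin m → Fin n, a f * ∏ j, x (f j)) := by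
  refine continuous_finset_sum _ fun f _ => Continuous.mul continuous_const ?_
  exact continuous_finset_prod _ fun j _ => continuous_apply _

private lemma fiber_sum (a : (Fin m → Fin n) → ℝ)
    (hsym : ∀ (f : Fin m → Fin n) (σ : Equiv.Perm (Fin m)), a (f ∘ σ) = a f)
    (x : Fin n → ℝ) (z k : Fin m) (i : Fin n) :
    ∑ f ∈ Finset.univ.filter (fun f : Fin m → Fin n => f k = i),
        a f * ∏ j ∈ Finset.univ.erase k, x (f j)
      = ∑ f ∈ Finset.univ.filter (fun f : Fin m → Fin n => f z = i),
        a f * ∏ j ∈ Finset.univ.erase z, x (f j) := by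
  refine Finset.sum_nbij' (fun f => f ∘ Equiv.swap z k) (fun f => f ∘ Equiv.swap z k)
    ?_ ?_ ?_ ?_ ?_
  · intro f hf
    simp only [Finset.mem_filter, Finset.mem_univ, true_and] at hf ⊢
    simpa [Equiv.swap_apply_left] using hf
  · intro f hf
    simp only [Finset.mem_filter, Finset.mem_univ, true_and] at hf ⊢
    simpa [Equiv.swap_apply_right] using hf
  · intro f _
    funext j
    simp [Function.comp, Equiv.swap_apply_self]
  · intro f _
    funext j
    simp [Function.comp, Equiv.swap_apply_self]
  · intro f _
    rw [hsym f (Equiv.swap z k)]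
    congr 1
    refine Finset.prod_nbij' (fun j => Equiv.swap z k j) (fun j => Equiv.swap z k j)
      ?_ ?_ ?_ ?_ ?_
    · intro j hj
      simp only [Finset.mem_erase, Finset.mem_univ, and_true] at hj ⊢
      intro h
      exact hj ((Equiv.swap z k).injective (by simpa [Equiv.swap_apply_right] using h))
    · intro j hj
      simp only [Finset.mem_erase, Finset.mem_univ, and_true] at hj ⊢
      intro h
      exact hj ((Equiv.swap z k).injective (by simpa [Equiv.swap_apply_left] using h))
    · intro j _; simp [Equiv.swap_apply_self]
    · intro j _; simp [Equiv.swap_apply_self]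
    · intro j _; simp [Function.comp, Equiv.swap_apply_self]

end QiAux

/-- Qi's variational characterization: for an even order symmetric tensor, the
minimum H-eigenvalue exists and equals the minimum of the associated form over
`{x : ∑ |x_i|^m = 1}`, and also the minimum of `f_A(x)/‖x‖_m^m` over `x ≠ 0`. -/
theorem stmt_14 (m n : ℕ) (hm : 0 < m) (hn : 0 < n) (hme : Even m)
    (a : (Fin m → Fin n) → ℝ)
    (hsym : ∀ (f : Fin m → Fin n) (σ : Equiv.Perm (Fin m)), a (f ∘ σ) = a f) :
    ∃ lam : ℝ,
      IsLeast {l : ℝ | ∃ x : Fin n → ℝ, x ≠ 0 ∧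
        ∀ i : Fin n,
          ∑ f ∈ Finset.univ.filter (fun f : Fin m → Fin n => f ⟨0, hm⟩ = i),
              a f * ∏ j ∈ Finset.univ.erase ⟨0, hm⟩, x (f j)
            = l * x i ^ (m - 1)} lam ∧
      IsLeast {v : ℝ | ∃ x : Fin n → ℝ, (∑ i, |x i| ^ m) = 1 ∧
        v = ∑ f : Fin m → Fin n, a f * ∏ j, x (f j)} lam ∧
      IsLeast {v : ℝ | ∃ x : Fin n → ℝ, x ≠ 0 ∧
        v = (∑ f : Fin m → Fin n, a f * ∏ j, x (f j)) / (∑ i, |x i| ^ m)}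
        lam := by
  have hm0 : (m : ℝ) ≠ 0 := Nat.cast_ne_zero.mpr hm.ne'
  set F : (Fin n → ℝ) → ℝ := fun x => ∑ f : Fin m → Fin n, a f * ∏ j, x (f j) with hF
  set S : Set (Fin n → ℝ) := {x | (∑ i, |x i| ^ m) = 1} with hS
  -- S is compact and nonempty
  have hGcont : Continuous fun x : Fin n → ℝ => ∑ i, |x i| ^ m := by
    refine continuous_finset_sum _ fun i _ => ?_
    exact ((continuous_apply i).abs.pow m)
  have hScomp : IsCompact S := by
    apply Metric.isCompact_of_isClosed_isBounded
    · exact isClosed_eq hGcont continuous_const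
    · apply Bornology.IsBounded.subset (Metric.isBounded_closedBall (x := (0 : Fin n → ℝ)) (r := 1))
      intro x hx
      simp only [Metric.mem_closedBall, dist_zero_right]
      rw [pi_norm_le_iff_of_nonneg zero_le_one]
      intro i
      rw [Real.norm_eq_abs]
      have h1 : |x i| ^ m ≤ 1 := by
        rw [← hx]
        exact Finset.single_le_sum (f := fun i => |x i| ^ m)
          (fun j _ => pow_nonneg (abs_nonneg _) m) (Finset.mem_univ i)
      exact (pow_le_one_iff_of_nonneg (abs_nonneg _) hm.ne').mp h1
  have hSne : S.Nonempty := by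
    set y : Fin n → ℝ := fun i => if i = ⟨0, hn⟩ then 1 else 0 with hy
    have h1 : (∑ i, |y i| ^ m) = 1 := by
      rw [Finset.sum_eq_single (⟨0, hn⟩ : Fin n)]
      · simp [hy]
      · intro j _ hj
        simp [hy, hj, zero_pow hm.ne']
      · simp
    exact ⟨y, h1⟩
  obtain ⟨x0, hx0S, hx0min⟩ := hScomp.exists_isMinOn hSne (tF_cont a).continuousOn
  set lam : ℝ := F x0 with hlam
  have hx0S' : (∑ i, |x0 i| ^ m) = 1 := hx0S
  have hx0ne : x0 ≠ 0 := by
    intro h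
    rw [h] at hx0S'
    simp [zero_pow hm.ne'] at hx0S'
  -- lower bound for set 2
  have hlb2 : ∀ y : Fin n → ℝ, (∑ i, |y i| ^ m) = 1 → lam ≤ F y := by
    intro y hy
    exact hx0min hy
  -- lower bound for set 3 (Rayleigh)
  have hlb3 : ∀ x : Fin n → ℝ, x ≠ 0 → lam ≤ F x / (∑ i, |x i| ^ m) := by
    intro x hx
    set s : ℝ := ∑ i, |x i| ^ m with hs
    have hspos : 0 < s := by
      obtain ⟨i, hi⟩ := Function.ne_iff.mp hx
      refine Finset.sum_pos' (fun j _ => pow_nonneg (abs_nonneg _) m) ⟨i, Finset.mem_univ i, ?_⟩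
      exact pow_pos (abs_pos.mpr hi) m
    set t : ℝ := s ^ ((m : ℝ)⁻¹) with ht
    have htpos : 0 < t := Real.rpow_pos_of_pos hspos _
    have htm : t ^ m = s := Real.rpow_inv_natCast_pow hspos.le hm.ne'
    have hy : (∑ i, |t⁻¹ * x i| ^ m) = 1 := by
      have : ∀ i, |t⁻¹ * x i| ^ m = (t⁻¹) ^ m * |x i| ^ m := by
        intro i
        rw [abs_mul, mul_pow, abs_of_pos (inv_pos.mpr htpos)]
      simp_rw [this]
      rw [← Finset.mul_sum, ← hs, inv_pow, htm, inv_mul_cancel₀ hspos.ne']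
    have := hlb2 (fun i => t⁻¹ * x i) hy
    have h2 : F (fun i => t⁻¹ * x i) = t⁻¹ ^ m * F x := tF_smul a t⁻¹ x
    rwa [h2, inv_pow, htm, ← div_eq_inv_mul] at this
  -- homogeneity even fact
  have heven : ∀ y : Fin n → ℝ, (∑ j, |y j| ^ m) = ∑ j, y j ^ m := by
    intro y
    exact Finset.sum_congr rfl fun j _ => hme.pow_abs (y j)
  have hpowm : ∀ t : ℝ, t * t ^ (m - 1) = t ^ m := by
    intro t
    obtain ⟨k, hk⟩ : ∃ k, m = k + 1 := ⟨m - 1, (Nat.succ_pred_eq_of_pos hm).symm⟩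
    rw [hk, Nat.add_sub_cancel, pow_succ]
    ring
  refine ⟨lam, ?_, ?_, ?_⟩
  · set z : Fin m := ⟨0, hm⟩ with hz
    constructor
    · -- x0 is an eigenvector with eigenvalue lam
      refine ⟨x0, hx0ne, ?_⟩
      intro i
      set e : Fin n → ℝ := fun j => if j = i then (1:ℝ) else 0 with he
      set C : ℝ := ∑ f ∈ Finset.univ.filter (fun f : Fin m → Fin n => f z = i),
        a f * ∏ j ∈ Finset.univ.erase z, x0 (f j) with hC
      set P : ℝ → ℝ := fun t => ∑ f : Fin m → Fin n, a f * ∏ j, (x0 (f j) + t * e (f j))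
        with hPdef
      set Q : ℝ → ℝ := fun t => ∑ j, (x0 j + t * e j) ^ m with hQdef
      set p0 : ℝ := ∑ f : Fin m → Fin n,
        a f * ∑ k : Fin m, (∏ j ∈ Finset.univ.erase k, x0 (f j)) * e (f k) with hp0
      have hPd : HasDerivAt P p0 0 := by
        apply HasDerivAt.fun_sum
        intro f _
        have hfac : ∀ c : Fin m, HasDerivAt (fun t : ℝ => x0 (f c) + t * e (f c)) (e (f c)) 0 :=
          fun c => (hasDerivAt_mul_const (e (f c))).const_add (x0 (f c))
        have := HasDerivAt.fun_finsetProd (u := (Finset.univ : Finset (Fin m)))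
          (f := fun j t => x0 (f j) + t * e (f j)) (f' := fun j => e (f j)) (x := 0)
          (fun j _ => hfac j)
        simpa using this.const_mul (a f)
      have hQd : HasDerivAt Q ((m : ℝ) * x0 i ^ (m - 1)) 0 := by
        have h1 : HasDerivAt Q (∑ j, (m : ℝ) * x0 j ^ (m - 1) * e j) 0 := by
          apply HasDerivAt.fun_sum
          intro j _
          have hd : HasDerivAt (fun t : ℝ => (x0 j + t * e j) ^ m)
              ((m : ℝ) * (x0 j + 0 * e j) ^ (m - 1) * e j) 0 :=
            ((hasDerivAt_mul_const (e j)).const_add (x0 j)).pow m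
          simpa using hd
        have h2 : (∑ j, (m : ℝ) * x0 j ^ (m - 1) * e j) = (m : ℝ) * x0 i ^ (m - 1) := by
          rw [he]
          simp [mul_ite, mul_one, mul_zero]
        rwa [h2] at h1
      have hQ0 : Q 0 = 1 := by
        have : Q 0 = ∑ j, x0 j ^ m := by simp [hQdef]
        rw [this, ← heven x0, hx0S']
      have hP0 : P 0 = lam := by
        have : P 0 = F x0 := by simp [hPdef, hF]
        rw [this, hlam]
      have hQc : Continuous Q := by
        rw [hQdef]
        exact continuous_finset_sum _ fun j _ =>
          ((continuous_const.add (continuous_id.mul continuous_const)).pow m)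
      set φ : ℝ → ℝ := fun t => P t / Q t with hφdef
      have hφd : HasDerivAt φ ((p0 * Q 0 - P 0 * ((m : ℝ) * x0 i ^ (m - 1))) / Q 0 ^ 2) 0 :=
        hPd.div hQd (by rw [hQ0]; exact one_ne_zero)
      have hloc : IsLocalMin φ 0 := by
        show ∀ᶠ t in nhds 0, φ 0 ≤ φ t
        have hφ0 : φ 0 = lam := by rw [hφdef]; simp only; rw [hP0, hQ0, div_one]
        have hopen : IsOpen {t : ℝ | 0 < Q t} := isOpen_lt continuous_const hQc
        have hmem : (0 : ℝ) ∈ {t : ℝ | 0 < Q t} := by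
          show (0 : ℝ) < Q 0
          rw [hQ0]; norm_num
        filter_upwards [hopen.mem_nhds hmem] with t ht
        have ht : 0 < Q t := ht
        set yt : Fin n → ℝ := fun j => x0 j + t * e j with hyt
        have hyQ : (∑ j, |yt j| ^ m) = Q t := by rw [heven yt]
        have hytne : yt ≠ 0 := by
          intro h0
          have : Q t = 0 := by
            have : Q t = ∑ j, yt j ^ m := rfl
            rw [this, h0]
            simp [zero_pow hm.ne']
          rw [this] at ht; exact lt_irrefl 0 ht
        have hray := hlb3 yt hytne
        rw [hyQ] at hray
        rw [hφ0]
        exact hray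
      have hzero := hloc.hasDerivAt_eq_zero hφd
      rw [hQ0, hP0] at hzero
      have hkey : p0 = lam * ((m : ℝ) * x0 i ^ (m - 1)) := by
        have := hzero
        rw [one_pow, div_one, mul_one, sub_eq_zero] at this
        exact this
      -- p0 = m * C via symmetry
      have hp0C : p0 = (m : ℝ) * C := by
        rw [hp0]
        have step1 : ∀ f : Fin m → Fin n,
            a f * ∑ k : Fin m, (∏ j ∈ Finset.univ.erase k, x0 (f j)) * e (f k)
              = ∑ k : Fin m, (if f k = i then a f * ∏ j ∈ Finset.univ.erase k, x0 (f j) else 0) := by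
          intro f
          rw [Finset.mul_sum]
          refine Finset.sum_congr rfl fun k _ => ?_
          rw [he]
          by_cases h : f k = i <;> simp [h]
        simp_rw [step1]
        rw [Finset.sum_comm]
        have step2 : ∀ k : Fin m,
            (∑ f : Fin m → Fin n, if f k = i then a f * ∏ j ∈ Finset.univ.erase k, x0 (f j) else 0)
              = C := by
          intro k
          rw [← Finset.sum_filter, hC]
          exact fiber_sum a hsym x0 z k i
        simp_rw [step2]
        rw [Finset.sum_const, Finset.card_univ, Fintype.card_fin, nsmul_eq_mul]
      rw [hp0C] at hkey
      have : C = lam * x0 i ^ (m - 1) := by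
        apply mul_left_cancel₀ hm0
        rw [hkey]; ring
      exact this
    · -- lower bound: every H-eigenvalue is ≥ lam
      rintro l ⟨x, hx, hl⟩
      have hfib : (∑ i, x i * ∑ f ∈ Finset.univ.filter (fun f : Fin m → Fin n => f z = i),
          a f * ∏ j ∈ Finset.univ.erase z, x (f j)) = F x := by
        rw [hF]
        have step1 : ∀ i : Fin n,
            x i * ∑ f ∈ Finset.univ.filter (fun f : Fin m → Fin n => f z = i),
              a f * ∏ j ∈ Finset.univ.erase z, x (f j)
            = ∑ f ∈ Finset.univ.filter (fun f : Fin m → Fin n => f z = i),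
              a f * ∏ j, x (f j) := by
          intro i
          rw [Finset.mul_sum]
          refine Finset.sum_congr rfl fun f hf => ?_
          rw [Finset.mem_filter] at hf
          rw [← Finset.mul_prod_erase Finset.univ _ (Finset.mem_univ z), ← hf.2]
          ring
        simp_rw [step1]
        exact Finset.sum_fiberwise_of_maps_to (fun f _ => Finset.mem_univ (f z)) _
      have hcontr : F x = l * ∑ i, |x i| ^ m := by
        rw [← hfib]
        have : ∀ i : Fin n, x i * ∑ f ∈ Finset.univ.filter (fun f : Fin m → Fin n => f z = i),
            a f * ∏ j ∈ Finset.univ.erase z, x (f j) = l * x i ^ m := by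
          intro i
          rw [hl i, ← mul_assoc, mul_comm (x i) l, mul_assoc, hpowm]
        simp_rw [this]
        rw [← Finset.mul_sum, heven x]
      have hspos : 0 < ∑ i, |x i| ^ m := by
        obtain ⟨i, hi⟩ := Function.ne_iff.mp hx
        refine Finset.sum_pos' (fun j _ => pow_nonneg (abs_nonneg _) m) ⟨i, Finset.mem_univ i, ?_⟩
        exact pow_pos (abs_pos.mpr hi) m
      have := hlb3 x hx
      rw [hcontr, mul_div_assoc, div_self hspos.ne', mul_one] at this
      exact this
  · constructor
    · exact ⟨x0, hx0S', rfl⟩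
    · rintro v ⟨y, hy1, rfl⟩
      exact hlb2 y hy1
  · constructor
    · refine ⟨x0, hx0ne, ?_⟩
      rw [hx0S', div_one]
    · rintro v ⟨x, hx, rfl⟩
      exact hlb3 x hx
end

section
/- Let m be even and f_A the form of a symmetric tensor A. Then lambda_min(A) = sup{ mu : there exists r in R such that f_A(x) - r(||x||_m^m - 1) - mu is a nonnegative polynomial on R^n }, where ||x||_m^m = sum_i x_i^m. In particular, for any (mu, r) with f_A(x) - r(||x||_m^m - 1) - mu >= 0 for all x, one has mu <= r <= lambda_min(A). -/
open Finset

/-- SOS-style dual characterization of the minimum H-eigenvalue: with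
`λ_min(A) = min {A x^m : ∑ x_i^m = 1}` (attained at `y`),
`λ_min(A) = sup {μ : ∃ r, f_A(x) - r(‖x‖_m^m - 1) - μ ≥ 0 on ℝ^n}`, and any
such pair `(μ, r)` satisfies `μ ≤ r ≤ λ_min(A)`. -/
theorem stmt_16 (m n : ℕ) (hm : 0 < m) (hn : 0 < n) (hme : Even m)
    (a : (Fin m → Fin n) → ℝ)
    (hsym : ∀ (f : Fin m → Fin n) (σ : Equiv.Perm (Fin m)), a (f ∘ σ) = a f)
    (y : Fin n → ℝ) (hy : ∑ i, y i ^ m = 1)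
    (hmin : ∀ x : Fin n → ℝ, ∑ i, x i ^ m = 1 →
      (∑ f : Fin m → Fin n, a f * ∏ j, y (f j))
        ≤ ∑ f : Fin m → Fin n, a f * ∏ j, x (f j)) :
    (∑ f : Fin m → Fin n, a f * ∏ j, y (f j))
      = sSup {μ : ℝ | ∃ r : ℝ, ∀ x : Fin n → ℝ,
          0 ≤ (∑ f : Fin m → Fin n, a f * ∏ j, x (f j))
                - r * ((∑ i, x i ^ m) - 1) - μ} ∧
    ∀ μ r : ℝ,
      (∀ x : Fin n → ℝ,
        0 ≤ (∑ f : Fin m → Fin n, a f * ∏ j, x (f j))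
              - r * ((∑ i, x i ^ m) - 1) - μ) →
      μ ≤ r ∧ r ≤ ∑ f : Fin m → Fin n, a f * ∏ j, y (f j) := by
  set F : (Fin n → ℝ) → ℝ := fun x => ∑ f : Fin m → Fin n, a f * ∏ j, x (f j) with hF
  -- scaling property
  have hscale : ∀ (c : ℝ) (x : Fin n → ℝ), F (fun i => c * x i) = c ^ m * F x := by
    intro c x
    simp only [hF]
    rw [Finset.mul_sum]
    refine Finset.sum_congr rfl fun f _ => ?_
    rw [Finset.prod_mul_distrib, Finset.prod_const]
    simp [Finset.card_univ]
    ring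
  have hFzero : F (fun _ => 0) = 0 := by
    simp only [hF]
    apply Finset.sum_eq_zero
    intro f _
    have : (∏ _j : Fin m, (0:ℝ)) = 0 := by
      rw [Finset.prod_const]
      simp [Finset.card_univ, zero_pow hm.ne']
    simp [this]
  have hz : (∑ i : Fin n, (0:ℝ) ^ m) = 0 := by
    simp [zero_pow hm.ne']
  -- key homogeneity inequality
  have hkey : ∀ x : Fin n → ℝ, F y * ∑ i, x i ^ m ≤ F x := by
    intro x
    have hs0 : ∀ i : Fin n, 0 ≤ x i ^ m := fun i => hme.pow_nonneg _
    by_cases hs : (∑ i, x i ^ m) = 0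
    · have hx : ∀ i, x i = 0 := by
        intro i
        have h1 := (Finset.sum_eq_zero_iff_of_nonneg (fun i _ => hs0 i)).mp hs i (mem_univ i)
        exact pow_eq_zero_iff hm.ne' |>.mp h1
      have hFx : F x = 0 := by
        have : x = fun _ => 0 := funext hx
        rw [this, hFzero]
      rw [hs, hFx, mul_zero]
    · have hspos : 0 < ∑ i, x i ^ m :=
        lt_of_le_of_ne (Finset.sum_nonneg fun i _ => hs0 i) (Ne.symm hs)
      set s := ∑ i, x i ^ m with hsdef
      set c := s ^ ((m:ℝ)⁻¹) with hc
      have hcpos : 0 < c := Real.rpow_pos_of_pos hspos _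
      have hcm : c ^ m = s := by
        rw [hc, ← Real.rpow_natCast (s ^ ((m:ℝ)⁻¹)) m, ← Real.rpow_mul hspos.le]
        rw [inv_mul_cancel₀ (by exact_mod_cast hm.ne' : (m:ℝ) ≠ 0), Real.rpow_one]
      have hu : ∑ i, (c⁻¹ * x i) ^ m = 1 := by
        have he : ∀ i, (c⁻¹ * x i) ^ m = c⁻¹ ^ m * x i ^ m := fun i => mul_pow _ _ _
        simp only [he]
        rw [← Finset.mul_sum, ← hsdef, inv_pow, hcm, inv_mul_cancel₀ hs]
      have h0 := hmin (fun i => c⁻¹ * x i) hu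
      have h1 : F y ≤ c⁻¹ ^ m * F x := by rw [← hscale]; exact h0
      have h2 : c⁻¹ ^ m = s⁻¹ := by rw [inv_pow, hcm]
      rw [h2] at h1
      have h3 : F y * s ≤ s⁻¹ * F x * s := by
        exact mul_le_mul_of_nonneg_right h1 hspos.le
      calc F y * s ≤ s⁻¹ * F x * s := h3
        _ = F x := by field_simp
  constructor
  · -- sSup part
    apply Eq.symm
    apply IsGreatest.csSup_eq
    constructor
    · exact ⟨F y, fun x => by have := hkey x; nlinarith [hkey x]⟩
    · rintro μ ⟨r, hr⟩
      have := hr y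
      rw [hy] at this
      simp only [sub_self, mul_zero] at this
      linarith
  · intro μ r hr
    constructor
    · have h0 := hr (fun _ => 0)
      rw [hz] at h0
      have : F (fun _ => 0) = 0 := hFzero
      simp only [hF] at this ⊢
      rw [this] at h0
      linarith
    · by_contra h
      push_neg at h
      set d := r - F y with hd
      have hdpos : 0 < d := by simp [hd]; linarith
      set t := max 1 ((r - μ) / d + 1) with ht
      have ht1 : (1:ℝ) ≤ t := le_max_left _ _
      have ht2 : (r - μ) / d + 1 ≤ t := le_max_right _ _
      have htd : r - μ < t * d := by
        have : (r - μ) / d < t := by linarith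
        calc r - μ = (r - μ) / d * d := by field_simp
          _ < t * d := by exact mul_lt_mul_of_pos_right this hdpos
      have htm : t ≤ t ^ m := by
        calc t = t ^ 1 := (pow_one t).symm
          _ ≤ t ^ m := pow_le_pow_right₀ ht1 hm
      have hsum : ∑ i, (t * y i) ^ m = t ^ m := by
        have he : ∀ i, (t * y i) ^ m = t ^ m * y i ^ m := fun i => mul_pow _ _ _
        simp only [he]
        rw [← Finset.mul_sum, hy, mul_one]
      have hFy : F (fun i => t * y i) = t ^ m * F y := hscale t y
      have h1 := hr (fun i => t * y i)
      rw [hsum] at h1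
      simp only [hF] at hFy
      rw [hFy] at h1
      -- 0 ≤ t^m * F y - r * (t^m - 1) - μ, i.e. t^m*(F y - r) + r - μ ≥ 0
      -- but t^m * d ≥ t * d > r - μ, contradiction
      have htd2 : r - μ < t ^ m * d := by
        have : t * d ≤ t ^ m * d := mul_le_mul_of_nonneg_right htm hdpos.le
        linarith
      have : t ^ m * (F y - r) = -(t ^ m * d) := by rw [hd]; ring
      nlinarith [htd2, h1]
end
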